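/- arXiv:math/0407519 — 6 statements merged into one kernel-verified Lean document; each statement's English description precedes it below -/
import Mathlib

section
/- The number of pairs of rows of n cells, each cell containing a black or white particle, such that the total number of black particles equals n (and hence white particles also n) and, for every j from 0 to n, the number of black particles in the first j columns is at least the number of white particles in the first j columns, equals the Catalan number C_{n+1} = (1/(n+2)) * binomial(2n+2, n+1). -/
open Finset

/-- Number of black particles (value `true`) among the cells of the first `j` columns
(both rows) of a two-row configuration. -/
def blackCount (n : ℕ) (ω : Fin n × Bool → Bool) (j : ℕ) : ℕ :=
  ((Finset.univ : Finset (Fin n × Bool)).filter (fun p => p.1.val < j ∧ ω p = true)).card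

/-- Number of white particles (value `false`) among the cells of the first `j` columns. -/
def whiteCount (n : ℕ) (ω : Fin n × Bool → Bool) (j : ℕ) : ℕ :=
  ((Finset.univ : Finset (Fin n × Bool)).filter (fun p => p.1.val < j ∧ ω p = false)).card

/-- A complete configuration: `n` black particles in total (balance), and every
column prefix contains at least as many black as white particles (positivity). -/
def IsCompleteCfg (n : ℕ) (ω : Fin n × Bool → Bool) : Prop :=
  blackCount n ω n = n ∧ ∀ j ≤ n, whiteCount n ω j ≤ blackCount n ω j

instance (n : ℕ) : DecidablePred (IsCompleteCfg n) := fun ω => by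
  unfold IsCompleteCfg; infer_instance



def cnt : ℕ → ℕ → ℕ
  | 0, 0 => 1
  | 0, _+1 => 0
  | m+1, 0 => 2 * cnt m 0 + cnt m 1
  | m+1, h+1 => cnt m h + 2 * cnt m (h+1) + cnt m (h+2)

lemma cnt_eq_zero : ∀ m h, m < h → cnt m h = 0 := by
  intro m
  induction m with
  | zero => intro h hh; match h, hh with | h+1, _ => rfl
  | succ m ih =>
    intro h hh
    match h, hh with
    | h+1, hh =>
      show cnt m h + 2 * cnt m (h+1) + cnt m (h+2) = 0
      rw [ih h (by omega), ih (h+1) (by omega), ih (h+2) (by omega)]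

lemma pascal2 (N k : ℕ) :
    Nat.choose (N+2) (k+2) = Nat.choose N k + 2 * Nat.choose N (k+1) + Nat.choose N (k+2) := by
  simp [Nat.choose_succ_succ]; ring

lemma cnt_key : ∀ m h d, h + d = m → cnt m h + Nat.choose (2*m+1) (m+h+2) = Nat.choose (2*m+1) d := by
  intro m
  induction m with
  | zero =>
    intro h d he
    have h0 : h = 0 := by omega
    have d0 : d = 0 := by omega
    subst h0; subst d0; decide
  | succ m ih =>
    intro h d he
    match h with
    | 0 =>
      have hd : d = m + 1 := by omega
      subst hd
      show 2 * cnt m 0 + cnt m 1 + Nat.choose (2*(m+1)+1) ((m+1)+0+2) = Nat.choose (2*(m+1)+1) (m+1)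
      match m with
      | 0 => decide
      | k+1 =>
        have A := ih 0 (k+1) (by omega)
        have B := ih 1 k (by omega)
        have F1 := pascal2 (2*(k+1)+1) (k+2)
        have F2 := pascal2 (2*(k+1)+1) k
        ring_nf at A B F1 F2 ⊢
        omega
    | h+1 =>
      show cnt m h + 2 * cnt m (h+1) + cnt m (h+2) + Nat.choose (2*(m+1)+1) ((m+1)+(h+1)+2)
          = Nat.choose (2*(m+1)+1) d
      match d, he with
      | 0, he =>
        have hm : h = m := by omega
        subst hm
        have Z1 := cnt_eq_zero h (h+1) (by omega)
        have Z2 := cnt_eq_zero h (h+2) (by omega)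
        have A := ih h 0 (by omega)
        have C0 : Nat.choose (2*h+1) (h+h+2) = 0 := Nat.choose_eq_zero_of_lt (by omega)
        have C1 : Nat.choose (2*(h+1)+1) ((h+1)+(h+1)+2) = 0 := Nat.choose_eq_zero_of_lt (by omega)
        have C2 : Nat.choose (2*(h+1)+1) 0 = 1 := Nat.choose_zero_right _
        have C3 : Nat.choose (2*h+1) 0 = 1 := Nat.choose_zero_right _
        ring_nf at Z1 Z2 A C0 C1 C2 C3 ⊢
        omega
      | 1, he =>
        have hm : m = h + 1 := by omega
        subst hm
        have Z1 := cnt_eq_zero (h+1) (h+2) (by omega)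
        have A := ih h 1 (by omega)
        have B := ih (h+1) 0 (by omega)
        have C0 : Nat.choose (2*(h+1)+1) ((h+1)+h+2) = 1 := by
          rw [show (h+1)+h+2 = 2*(h+1)+1 by omega]; exact Nat.choose_self _
        have C1 : Nat.choose (2*(h+1)+1) ((h+1)+(h+1)+2) = 0 := Nat.choose_eq_zero_of_lt (by omega)
        have C2 : Nat.choose (2*(h+1+1)+1) ((h+1+1)+(h+1)+2) = 1 := by
          rw [show (h+1+1)+(h+1)+2 = 2*(h+1+1)+1 by omega]; exact Nat.choose_self _
        have C3 : Nat.choose (2*(h+1)+1) 1 = 2*(h+1)+1 := Nat.choose_one_right _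
        have C4 : Nat.choose (2*(h+1+1)+1) 1 = 2*(h+1+1)+1 := Nat.choose_one_right _
        have C5 : Nat.choose (2*(h+1)+1) 0 = 1 := Nat.choose_zero_right _
        ring_nf at Z1 A B C0 C1 C2 C3 C4 C5 ⊢
        omega
      | e+2, he =>
        have A := ih h (e+2) (by omega)
        have B := ih (h+1) (e+1) (by omega)
        have C := ih (h+2) e (by omega)
        have F1 := pascal2 (2*m+1) e
        have F2 := pascal2 (2*m+1) (m+h+2)
        have hm : m = h + e + 2 := by omega
        subst hm
        ring_nf at A B C F1 F2 ⊢
        omega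

lemma cnt_catalan (n : ℕ) : cnt n 0 = catalan (n+1) := by
  have K := cnt_key n 0 n (by omega)
  norm_num at K
  set X := Nat.choose (2*n+1) n with hX
  have S : Nat.choose (2*n+1) (n+1) = X := by
    rw [hX, ← Nat.choose_symm (show n ≤ 2*n+1 by omega)]; congr 1; omega
  have R : Nat.choose (2*n+1) (n+2) * (n+2) = X * n := by
    have h2 := Nat.choose_succ_right_eq (2*n+1) (n+1)
    rw [show 2*n+1-(n+1) = n by omega, S] at h2; exact h2
  have P : Nat.choose (2*n+2) (n+1) = X + X := by
    rw [show 2*n+2 = (2*n+1)+1 by omega, Nat.choose_succ_succ, S, hX]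
  have CB : (n+2) * catalan (n+1) = Nat.choose (2*n+2) (n+1) := by
    have := succ_mul_catalan_eq_centralBinom (n+1)
    rwa [Nat.centralBinom, show 2*(n+1) = 2*n+2 by omega] at this
  have E1 : (n+2) * cnt n 0 + (n+2) * Nat.choose (2*n+1) (n+2) = (n+2) * X := by
    rw [← Nat.mul_add, K]
  have R' : (n+2) * Nat.choose (2*n+1) (n+2) = n * X := by rw [mul_comm, R, mul_comm]
  have e3 : (n+2) * X = n * X + (X + X) := by ring
  have E2 : (n+2) * cnt n 0 = X + X := by linarith [E1, R', e3]
  have E3 : (n+2) * cnt n 0 = (n+2) * catalan (n+1) := by rw [E2, CB, P]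
  exact Nat.eq_of_mul_eq_mul_left (by omega) E3

lemma blackCount_eq_sum (n : ℕ) (ω : Fin n × Bool → Bool) (j : ℕ) :
    blackCount n ω j = ∑ i : Fin n,
      ((if i.val < j ∧ ω (i, true) = true then 1 else 0)
        + (if i.val < j ∧ ω (i, false) = true then 1 else 0)) := by
  rw [blackCount, Finset.card_filter, Fintype.sum_prod_type]
  exact Finset.sum_congr rfl fun i _ => by rw [Fintype.sum_bool]

lemma whiteCount_eq_sum (n : ℕ) (ω : Fin n × Bool → Bool) (j : ℕ) :
    whiteCount n ω j = ∑ i : Fin n,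
      ((if i.val < j ∧ ω (i, true) = false then 1 else 0)
        + (if i.val < j ∧ ω (i, false) = false then 1 else 0)) := by
  rw [whiteCount, Finset.card_filter, Fintype.sum_prod_type]
  exact Finset.sum_congr rfl fun i _ => by rw [Fintype.sum_bool]

lemma black_add_white (n : ℕ) (ω : Fin n × Bool → Bool) (j : ℕ) (hj : j ≤ n) :
    blackCount n ω j + whiteCount n ω j = 2 * j := by
  rw [blackCount_eq_sum, whiteCount_eq_sum, ← Finset.sum_add_distrib]
  have : ∀ i : Fin n,
      ((if i.val < j ∧ ω (i, true) = true then 1 else 0)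
        + (if i.val < j ∧ ω (i, false) = true then 1 else 0))
      + ((if i.val < j ∧ ω (i, true) = false then 1 else 0)
        + (if i.val < j ∧ ω (i, false) = false then (1:ℕ) else 0))
      = if i.val < j then 2 else 0 := by
    intro i
    by_cases h : i.val < j
    · cases h1 : ω (i, true) <;> cases h2 : ω (i, false) <;> simp [h, h1, h2]
    · simp [h]
  rw [Finset.sum_congr rfl fun i _ => this i]
  rw [Fin.sum_univ_eq_sum_range (fun i => if i < j then 2 else 0) n]
  rw [Finset.sum_ite, Finset.sum_const_zero, add_zero, Finset.sum_const,
    show Finset.filter (fun i => i < j) (Finset.range n) = Finset.range j from by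
      ext x; simp; omega, Finset.card_range]
  ring

def extCfg (m : ℕ) (ω : Fin m × Bool → Bool) (b : Bool × Bool) : Fin (m+1) × Bool → Bool :=
  fun p => if h : (p.1 : ℕ) < m then ω (⟨p.1, h⟩, p.2) else (if p.2 then b.1 else b.2)

def extEquiv (m : ℕ) : (Fin m × Bool → Bool) × (Bool × Bool) ≃ (Fin (m+1) × Bool → Bool) where
  toFun x := extCfg m x.1 x.2
  invFun ω := (fun p => ω (p.1.castSucc, p.2), (ω (Fin.last m, true), ω (Fin.last m, false)))
  left_inv := by
    rintro ⟨ω, b₁, b₂⟩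
    refine Prod.ext ?_ ?_
    · funext p
      simp only [extCfg, Fin.coe_castSucc, Fin.is_lt, dif_pos]
    · simp [extCfg, Fin.last]
  right_inv := by
    intro ω; funext p
    by_cases h : (p.1 : ℕ) < m
    · simp only [extCfg, h, dif_pos]
      congr 1
    · simp only [extCfg, h, dif_neg, not_false_iff]
      have hp : p.1 = Fin.last m := Fin.ext (by have := p.1.is_lt; simp [Fin.last]; omega)
      cases hb : p.2 <;> simp [hp, hb] <;> rw [← hb] <;> congr <;> exact hp.symm

lemma bc_ext_le (m : ℕ) (ω : Fin m × Bool → Bool) (b : Bool × Bool) (j : ℕ) (hj : j ≤ m) :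
    blackCount (m+1) (extCfg m ω b) j = blackCount m ω j := by
  rw [blackCount_eq_sum, blackCount_eq_sum, Fin.sum_univ_castSucc]
  have hlast : ¬ ((Fin.last m : Fin (m+1)).val < j) := by simp [Fin.last]; omega
  simp only [hlast, false_and, if_false, add_zero]
  refine Finset.sum_congr rfl fun i _ => ?_
  have h1 : extCfg m ω b (Fin.castSucc i, true) = ω (i, true) := by
    simp only [extCfg, Fin.coe_castSucc, Fin.is_lt, dif_pos]
  have h2 : extCfg m ω b (Fin.castSucc i, false) = ω (i, false) := by
    simp only [extCfg, Fin.coe_castSucc, Fin.is_lt, dif_pos]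
  rw [h1, h2, Fin.coe_castSucc]

lemma bc_ext_top (m : ℕ) (ω : Fin m × Bool → Bool) (b : Bool × Bool) :
    blackCount (m+1) (extCfg m ω b) (m+1)
      = blackCount m ω m + ((if b.1 then 1 else 0) + (if b.2 then 1 else 0)) := by
  rw [blackCount_eq_sum, blackCount_eq_sum, Fin.sum_univ_castSucc]
  have hlast : ((Fin.last m : Fin (m+1)).val < m+1) := by simp [Fin.last]
  have e1 : extCfg m ω b (Fin.last m, true) = b.1 := by
    simp [extCfg, Fin.last]
  have e2 : extCfg m ω b (Fin.last m, false) = b.2 := by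
    simp [extCfg, Fin.last]
  simp only [hlast, true_and, e1, e2]
  congr 1
  refine Finset.sum_congr rfl fun i _ => ?_
  have h1 : extCfg m ω b (Fin.castSucc i, true) = ω (i, true) := by
    simp only [extCfg, Fin.coe_castSucc, Fin.is_lt, dif_pos]
  have h2 : extCfg m ω b (Fin.castSucc i, false) = ω (i, false) := by
    simp only [extCfg, Fin.coe_castSucc, Fin.is_lt, dif_pos]
  rw [h1, h2, Fin.coe_castSucc]
  have hi : (i : ℕ) < m + 1 := by omega
  have hi2 : (i : ℕ) < m := i.is_lt
  simp [hi, hi2]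

def Pred (m h : ℕ) (ω : Fin m × Bool → Bool) : Prop :=
  (∀ j ≤ m, j ≤ blackCount m ω j) ∧ blackCount m ω m = m + h

instance (m h : ℕ) : DecidablePred (Pred m h) := fun ω => by
  unfold Pred; infer_instance

def G (m h : ℕ) : Finset (Fin m × Bool → Bool) := Finset.univ.filter (Pred m h)

lemma pred_ext_iff (m h : ℕ) (ω : Fin m × Bool → Bool) (b : Bool × Bool) :
    Pred (m+1) h (extCfg m ω b) ↔
      ((∀ j ≤ m, j ≤ blackCount m ω j)
        ∧ blackCount m ω m + ((if b.1 then 1 else 0) + (if b.2 then 1 else 0)) = m + 1 + h) := by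
  constructor
  · rintro ⟨h1, h2⟩
    refine ⟨fun j hj => ?_, ?_⟩
    · have := h1 j (by omega)
      rwa [bc_ext_le m ω b j hj] at this
    · rw [← bc_ext_top m ω b]; exact h2
  · rintro ⟨h1, h2⟩
    refine ⟨fun j hj => ?_, ?_⟩
    · rcases Nat.lt_or_ge j (m+1) with hj' | hj'
      · rw [bc_ext_le m ω b j (by omega)]; exact h1 j (by omega)
      · have hj2 : j = m + 1 := by omega
        subst hj2
        rw [bc_ext_top m ω b, h2]; omega
    · rw [bc_ext_top m ω b]; exact h2

lemma card_G_succ (m h : ℕ) :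
    (G (m+1) h).card
      = (Finset.univ.filter (fun ω : Fin m × Bool → Bool =>
            (∀ j ≤ m, j ≤ blackCount m ω j)
              ∧ blackCount m ω m + 2 = m + 1 + h)).card
        + 2 * (G m h).card + (G m (h+1)).card := by
  have step1 : (G (m+1) h).card
      = ∑ b : Bool × Bool, (Finset.univ.filter
          (fun ω : Fin m × Bool → Bool => Pred (m+1) h (extCfg m ω b))).card := by
    rw [G, ← Fintype.card_subtype]
    rw [← Fintype.card_congr ((extEquiv m).subtypeEquiv (fun x => Iff.rfl))]
    rw [Fintype.card_congr (((Equiv.prodComm _ _).symm.subtypeEquiv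
      (fun x => Iff.rfl)).symm.trans
        (Equiv.subtypeProdEquivSigmaSubtype
          (fun (b : Bool × Bool) (ω : Fin m × Bool → Bool) =>
            Pred (m+1) h (extCfg m ω b))))]
    rw [Fintype.card_sigma]
    exact Finset.sum_congr rfl fun b _ => Fintype.card_subtype _
  rw [step1, Fintype.sum_prod_type]
  simp only [Fintype.sum_bool]
  have e1 : ∀ ω : Fin m × Bool → Bool, Pred (m+1) h (extCfg m ω (true, true)) ↔
      ((∀ j ≤ m, j ≤ blackCount m ω j) ∧ blackCount m ω m + 2 = m + 1 + h) := by
    intro ω; rw [pred_ext_iff]; norm_num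
  have e2 : ∀ ω : Fin m × Bool → Bool, Pred (m+1) h (extCfg m ω (true, false)) ↔ Pred m h ω := by
    intro ω; rw [pred_ext_iff]; unfold Pred; norm_num
    intro _; omega
  have e3 : ∀ ω : Fin m × Bool → Bool, Pred (m+1) h (extCfg m ω (false, true)) ↔ Pred m h ω := by
    intro ω; rw [pred_ext_iff]; unfold Pred; norm_num
    intro _; omega
  have e4 : ∀ ω : Fin m × Bool → Bool, Pred (m+1) h (extCfg m ω (false, false)) ↔ Pred m (h+1) ω := by
    intro ω; rw [pred_ext_iff]; unfold Pred; norm_num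
    intro _; omega
  rw [Finset.filter_congr fun ω _ => e1 ω, Finset.filter_congr fun ω _ => e2 ω,
    Finset.filter_congr fun ω _ => e3 ω, Finset.filter_congr fun ω _ => e4 ω]
  show _ = _ + 2 * (Finset.univ.filter (Pred m h)).card + (Finset.univ.filter (Pred m (h+1))).card
  ring


lemma card_G (m : ℕ) : ∀ h, (G m h).card = cnt m h := by
  induction m with
  | zero =>
    intro h
    match h with
    | 0 =>
      show (Finset.univ.filter (Pred 0 0)).card = 1
      have hall : ∀ ω : Fin 0 × Bool → Bool, Pred 0 0 ω := by
        intro ω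
        constructor
        · intro j hj
          have hj0 : j = 0 := by omega
          subst hj0; exact Nat.zero_le _
        · simp [blackCount]
      rw [Finset.filter_true_of_mem fun ω _ => hall ω, Finset.card_univ]
      simp
    | h+1 =>
      show (Finset.univ.filter (Pred 0 (h+1))).card = 0
      rw [Finset.card_eq_zero, Finset.filter_eq_empty_iff]
      rintro ω _ ⟨_, hb⟩
      simp [blackCount] at hb
  | succ m ih =>
    intro h
    rw [card_G_succ]
    match h with
    | 0 =>
      have z : (Finset.univ.filter (fun ω : Fin m × Bool → Bool =>
          (∀ j ≤ m, j ≤ blackCount m ω j)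
            ∧ blackCount m ω m + 2 = m + 1 + 0)).card = 0 := by
        rw [Finset.card_eq_zero, Finset.filter_eq_empty_iff]
        rintro ω _ ⟨a, c⟩
        have := a m le_rfl; omega
      rw [z, ih 0, ih 1]
      show 0 + 2 * cnt m 0 + cnt m 1 = 2 * cnt m 0 + cnt m 1
      omega
    | h+1 =>
      have e : Finset.univ.filter (fun ω : Fin m × Bool → Bool =>
          (∀ j ≤ m, j ≤ blackCount m ω j)
            ∧ blackCount m ω m + 2 = m + 1 + (h+1)) = G m h := by
        refine Finset.filter_congr fun ω _ => ?_
        unfold Pred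
        constructor <;> rintro ⟨a, c⟩ <;> exact ⟨a, by omega⟩
      rw [e, ih h, ih (h+1), ih (h+2)]
      show cnt m h + 2 * cnt m (h+1) + cnt m (h+2)
          = cnt m h + 2 * cnt m (h+1) + cnt m (h+2)
      rfl

lemma completeCfg_filter_eq (n : ℕ) :
    (Finset.univ : Finset (Fin n × Bool → Bool)).filter (fun ω => IsCompleteCfg n ω)
      = G n 0 := by
  refine Finset.filter_congr fun ω _ => ?_
  unfold IsCompleteCfg Pred
  constructor
  · rintro ⟨hb, hw⟩
    refine ⟨fun j hj => ?_, by omega⟩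
    have h2 := black_add_white n ω j hj
    have h3 := hw j hj
    omega
  · rintro ⟨ha, hb⟩
    refine ⟨by omega, fun j hj => ?_⟩
    have h2 := black_add_white n ω j hj
    have h3 := ha j hj
    omega

/-- The number of complete configurations of length `n` is the Catalan number
`C_{n+1} = (1/(n+2)) * binomial (2n+2) (n+1)`. -/
theorem stmt0 (n : ℕ) :
    ((Finset.univ : Finset (Fin n × Bool → Bool)).filter
        (fun ω => IsCompleteCfg n ω)).card = catalan (n + 1)
    ∧ catalan (n + 1) * (n + 2) = Nat.choose (2 * n + 2) (n + 1) := by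
  constructor
  · rw [completeCfg_filter_eq, card_G, cnt_catalan]
  · have hc := succ_mul_catalan_eq_centralBinom (n+1)
    rw [Nat.centralBinom] at hc
    rw [mul_comm, show 2*n+2 = 2*(n+1) by ring]
    exact hc
end

section
/- For nonnegative integers k, m with k + m = n, the number of complete configurations of length n whose top row contains exactly k black and m white particles (and hence whose bottom row contains m black and k white particles) equals the Narayana-type number (1/(n+1)) * binomial(n+1, k) * binomial(n+1, m). -/
open Finset

/-- Number of black particles in the top row. -/
def topBlack (n : ℕ) (ω : Fin n × Bool → Bool) : ℕ :=
  ((Finset.univ : Finset (Fin n)).filter (fun i => ω (i, true) = true)).card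

def colVal (v : Bool × Bool) : ℕ := (if v.1 then 1 else 0) + (if v.2 then 1 else 0)

def pSum {n : ℕ} (c : Fin n → Bool × Bool) (j : ℕ) : ℕ :=
  ∑ i : Fin n, if (i : ℕ) < j then colVal (c i) else 0

def topCnt {n : ℕ} (c : Fin n → Bool × Bool) : ℕ :=
  ∑ i : Fin n, if (c i).1 then 1 else 0

def cfg (n k h : ℕ) : Finset (Fin n → Bool × Bool) :=
  Finset.univ.filter (fun c => (∀ j ≤ n, j ≤ pSum c j) ∧ pSum c n = n + h ∧ topCnt c = k)

lemma colVal_le (v : Bool × Bool) : colVal v ≤ 2 := by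
  rcases v with ⟨a, b⟩; cases a <;> cases b <;> simp [colVal]

lemma pSum_snoc {n : ℕ} (c : Fin n → Bool × Bool) (v : Bool × Bool) (j : ℕ) :
    pSum (Fin.snoc c v) j = pSum c j + if n < j then colVal v else 0 := by
  unfold pSum
  rw [Fin.sum_univ_castSucc]
  simp [Fin.snoc_castSucc, Fin.snoc_last]

lemma pSum_stable {n : ℕ} (c : Fin n → Bool × Bool) {j : ℕ} (hj : n ≤ j) :
    pSum c j = pSum c n := by
  unfold pSum
  refine Finset.sum_congr rfl fun i _ => ?_
  have := i.isLt
  rw [if_pos (by omega), if_pos (by omega)]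

lemma topCnt_snoc {n : ℕ} (c : Fin n → Bool × Bool) (v : Bool × Bool) :
    topCnt (Fin.snoc c v) = topCnt c + if v.1 then 1 else 0 := by
  unfold topCnt
  rw [Fin.sum_univ_castSucc]
  simp [Fin.snoc_castSucc, Fin.snoc_last]

lemma card_filter_snoc {α : Type*} [Fintype α] [DecidableEq α] {n : ℕ}
    (P : (Fin (n+1) → α) → Prop) [DecidablePred P] :
    (Finset.univ.filter P).card
      = ∑ v : α, (Finset.univ.filter fun c : Fin n → α => P (Fin.snoc c v)).card := by
  rw [Finset.card_eq_sum_card_fiberwise (f := fun g => g (Fin.last n)) (t := Finset.univ)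
    (fun x _ => Finset.mem_univ _)]
  refine Finset.sum_congr rfl fun v _ => ?_
  refine Finset.card_bij' (fun g _ => Fin.init g) (fun c _ => Fin.snoc c v) ?_ ?_ ?_ ?_
  · intro g hg
    simp only [Finset.mem_filter, Finset.mem_univ, true_and] at hg ⊢
    rw [show Fin.snoc (Fin.init g) v = g by rw [← hg.2]; exact Fin.snoc_init_self g]
    exact hg.1
  · intro c hc
    simp only [Finset.mem_filter, Finset.mem_univ, true_and] at hc ⊢
    exact ⟨hc, Fin.snoc_last _ _⟩
  · intro g hg
    simp only [Finset.mem_filter, Finset.mem_univ, true_and] at hg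
    show Fin.snoc (Fin.init g) v = g
    rw [← hg.2]; exact Fin.snoc_init_self g
  · intro c _
    exact Fin.init_snoc (α := fun _ => α) v c

lemma fiber_cfg (n k h : ℕ) (v : Bool × Bool) :
    (Finset.univ.filter fun c : Fin n → Bool × Bool => Fin.snoc c v ∈ cfg (n+1) k h) =
    if (if v.1 then 1 else 0) ≤ k ∧ colVal v ≤ h + 1
    then cfg n (k - if v.1 then 1 else 0) (h + 1 - colVal v) else ∅ := by
  have hcv := colVal_le v
  ext c
  simp only [cfg, Finset.mem_filter, Finset.mem_univ, true_and, pSum_snoc, topCnt_snoc]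
  have hst : pSum c (n+1) = pSum c n := pSum_stable c (by omega)
  by_cases hg : (if v.1 then 1 else 0) ≤ k ∧ colVal v ≤ h + 1
  · rw [if_pos hg]
    simp only [cfg, Finset.mem_filter, Finset.mem_univ, true_and]
    constructor
    · rintro ⟨pos, heq, htop⟩
      rw [if_pos (by omega)] at heq
      rw [hst] at heq
      refine ⟨fun j hj => ?_, by omega, by omega⟩
      have := pos j (by omega)
      rwa [if_neg (by omega), Nat.add_zero] at this
    · rintro ⟨pos, heq, htop⟩
      refine ⟨fun j hj => ?_, ?_, by omega⟩
      · by_cases hjn : j ≤ n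
        · rw [if_neg (by omega), Nat.add_zero]; exact pos j hjn
        · have hj1 : j = n + 1 := by omega
          rw [if_pos (by omega), hj1, hst]; omega
      · rw [if_pos (by omega), hst]; omega
  · rw [if_neg hg]
    simp only [Finset.notMem_empty, iff_false]
    rintro ⟨pos, heq, htop⟩
    rw [if_pos (by omega), hst] at heq
    have hn := pos n (by omega)
    rw [if_neg (by omega), Nat.add_zero] at hn
    have tb1 : (if v.1 then 1 else 0) ≤ 1 := by split <;> omega
    omega

lemma card_cfg_succ (n k h : ℕ) :
    (cfg (n+1) k h).card =
      (cfg n k (h+1)).card + (cfg n k h).card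
      + (if 1 ≤ k then (cfg n (k-1) h).card else 0)
      + (if 1 ≤ k ∧ 1 ≤ h then (cfg n (k-1) (h-1)).card else 0) := by
  have hd : (cfg (n+1) k h).card
      = ∑ v : Bool × Bool, (Finset.univ.filter
          fun c : Fin n → Bool × Bool => Fin.snoc c v ∈ cfg (n+1) k h).card := by
    rw [cfg, card_filter_snoc]
    simp [cfg]
  rw [hd, Fintype.sum_prod_type, Fintype.sum_bool, Fintype.sum_bool, Fintype.sum_bool,
    fiber_cfg, fiber_cfg, fiber_cfg, fiber_cfg]
  simp only [colVal]
  norm_num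
  have e1 : h + 1 - 2 = h - 1 := by omega
  have e2 : h + 1 - 1 = h := by omega
  simp only [e1, e2]
  split_ifs <;> simp_all <;> omega

lemma card_cfg_zero (k h : ℕ) :
    (cfg 0 k h).card = if k = 0 ∧ h = 0 then 1 else 0 := by
  unfold cfg
  split_ifs with hkh
  · obtain ⟨rfl, rfl⟩ := hkh
    simp [pSum, topCnt]
  · rw [Finset.card_eq_zero, Finset.filter_eq_empty_iff]
    intro c _
    simp [pSum, topCnt]
    omega

def ich (n : ℕ) (j : ℤ) : ℤ := if 0 ≤ j then (n.choose j.toNat : ℤ) else 0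

lemma ich_pascal (n : ℕ) (j : ℤ) : ich (n+1) j = ich n j + ich n (j-1) := by
  unfold ich
  rcases lt_trichotomy j 0 with hj | rfl | hj
  · rw [if_neg (by omega), if_neg (by omega), if_neg (by omega)]; ring
  · norm_num
  · rw [if_pos (by omega), if_pos (by omega), if_pos (by omega)]
    have ht : j.toNat = (j-1).toNat + 1 := by omega
    rw [ht, Nat.choose_succ_succ]
    push_cast; ring

lemma ich_symm (n : ℕ) (a b : ℤ) (hab : a + b = n) : ich n a = ich n b := by
  unfold ich
  by_cases ha : a < 0
  · rw [if_neg (by omega), if_pos (by omega), Nat.choose_eq_zero_of_lt (by omega), Nat.cast_zero]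
  · by_cases hb : b < 0
    · rw [if_pos (by omega), if_neg (by omega), Nat.choose_eq_zero_of_lt (by omega),
        Nat.cast_zero]
    · rw [if_pos (by omega), if_pos (by omega)]
      by_cases hn : a.toNat ≤ n
      · congr 1
        rw [show b.toNat = n - a.toNat by omega, Nat.choose_symm hn]
      · rw [Nat.choose_eq_zero_of_lt (by omega), Nat.choose_eq_zero_of_lt (by omega)]

def F (n : ℕ) (k h : ℤ) : ℤ :=
  ich n (k - h) * ich n ((n : ℤ) - k) - ich n (k - h - 1) * ich n ((n : ℤ) - k - 1)

lemma F_step (n : ℕ) (k h : ℤ) :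
    F (n+1) k h = F n (k-1) (h-1) + F n (k-1) h + F n k h + F n k (h+1) := by
  unfold F
  push_cast
  simp only [ich_pascal,
    show k - 1 - (h-1) = k - h from by ring,
    show k - 1 - h = k - h - 1 from by ring,
    show k - (h+1) = k - h - 1 from by ring,
    show k - h - 1 - 1 = k - h - 2 from by ring,
    show (n:ℤ) + 1 - k = (n:ℤ) - k + 1 from by ring,
    show (n:ℤ) - (k-1) = (n:ℤ) - k + 1 from by ring,
    show (n:ℤ) - k + 1 - 1 = (n:ℤ) - k from by ring]
  ring

lemma F_h_neg (n : ℕ) (j : ℤ) : F n j (-1) = 0 := by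
  unfold F
  rw [show (j - (-1) : ℤ) = j + 1 by ring]
  rw [show (j + 1 - 1 : ℤ) = j by ring]
  rw [ich_symm n (j+1) ((n:ℤ) - j - 1) (by ring), ich_symm n ((n:ℤ) - j) j (by ring)]
  ring

lemma F_k_neg (n : ℕ) (h : ℤ) (hh : 0 ≤ h) : F n (-1) h = 0 := by
  unfold F
  rw [show ((-1 : ℤ) - h) = -(h+1) by ring]
  rw [show ((-(h+1) : ℤ) - 1) = -(h+2) by ring]
  unfold ich
  rw [if_neg (show ¬(0:ℤ) ≤ -(h+1) by omega), if_neg (show ¬(0:ℤ) ≤ -(h+2) by omega)]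
  ring

lemma ich_zero (j : ℤ) : ich 0 j = if j = 0 then 1 else 0 := by
  unfold ich
  rcases lt_trichotomy j 0 with hj | rfl | hj
  · rw [if_neg (by omega), if_neg (by omega)]
  · norm_num
  · rw [if_pos (by omega), if_neg (by omega), Nat.choose_eq_zero_of_lt (by omega)]
    norm_num

theorem cfg_card (n : ℕ) : ∀ k h : ℕ, ((cfg n k h).card : ℤ) = F n k h := by
  induction n with
  | zero =>
    intro k h
    rw [card_cfg_zero]
    unfold F
    simp only [ich_zero]
    push_cast
    split_ifs <;> omega
  | succ n IH =>
    intro k h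
    rw [card_cfg_succ]
    rcases k with _ | k'
    · rcases h with _ | h'
      · rw [if_neg (by omega), if_neg (by omega)]
        push_cast
        rw [IH 0 1, IH 0 0, F_step]
        norm_num
        rw [F_h_neg, F_k_neg n 0 le_rfl]
        push_cast
        ring
      · rw [if_neg (by omega), if_neg (by omega)]
        push_cast
        rw [IH 0 (h'+2), IH 0 (h'+1), F_step]
        norm_num
        rw [F_k_neg n _ (by positivity), F_k_neg n _ (by positivity)]
        push_cast
        ring_nf
    · rcases h with _ | h'
      · rw [if_pos (by omega), if_neg (by omega)]
        push_cast
        rw [IH (k'+1) 1, IH (k'+1) 0, IH k' 0, F_step]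
        norm_num
        rw [F_h_neg]
        ring_nf
      · rw [if_pos (by omega), if_pos (by omega)]
        push_cast
        rw [IH (k'+1) (h'+2), IH (k'+1) (h'+1), IH k' (h'+1), IH k' h', F_step]
        push_cast
        norm_num
        ring_nf
def toCols (n : ℕ) (ω : Fin n × Bool → Bool) : Fin n → Bool × Bool :=
  fun i => (ω (i, true), ω (i, false))

lemma blackCount_eq (n : ℕ) (ω : Fin n × Bool → Bool) (j : ℕ) :
    blackCount n ω j = pSum (toCols n ω) j := by
  unfold blackCount pSum toCols
  rw [Finset.card_filter, Fintype.sum_prod_type]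
  refine Finset.sum_congr rfl fun i _ => ?_
  rw [Fintype.sum_bool]
  by_cases hij : (i : ℕ) < j
  · cases h1 : ω (i, true) <;> cases h2 : ω (i, false) <;> simp [hij, h1, h2, colVal]
  · simp [hij]

lemma topBlack_eq (n : ℕ) (ω : Fin n × Bool → Bool) :
    topBlack n ω = topCnt (toCols n ω) := by
  unfold topBlack topCnt toCols
  rw [Finset.card_filter]

lemma aux_count (n j : ℕ) (hj : j ≤ n) :
    (∑ i : Fin n, if (i : ℕ) < j then 1 else 0) = j := by
  rw [Fin.sum_univ_eq_sum_range (fun i => if i < j then 1 else 0) n]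
  rw [← Finset.sum_filter]
  rw [show (Finset.range n).filter (fun i => i < j) = Finset.range j from by
    ext x; simp; omega]
  simp

lemma main_card_eq (n k : ℕ) :
    ((Finset.univ : Finset (Fin n × Bool → Bool)).filter
        (fun ω => IsCompleteCfg n ω ∧ topBlack n ω = k)).card = (cfg n k 0).card := by
  refine Finset.card_bij' (fun ω _ => toCols n ω)
    (fun c _ => fun p => if p.2 then (c p.1).1 else (c p.1).2) ?_ ?_ ?_ ?_
  · intro ω hω
    simp only [Finset.mem_filter, Finset.mem_univ, true_and] at hω
    obtain ⟨⟨hbal, hpos⟩, htop⟩ := hω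
    simp only [cfg, Finset.mem_filter, Finset.mem_univ, true_and]
    refine ⟨fun j hj => ?_, ?_, ?_⟩
    · rw [← blackCount_eq]
      have := black_add_white n ω j hj
      have := hpos j hj
      omega
    · rw [← blackCount_eq, hbal]; omega
    · rw [← topBlack_eq, htop]
  · intro c hc
    simp only [cfg, Finset.mem_filter, Finset.mem_univ, true_and] at hc
    obtain ⟨hpos, hbal, htop⟩ := hc
    set ω : Fin n × Bool → Bool := fun p => if p.2 then (c p.1).1 else (c p.1).2 with hω
    have hcols : toCols n ω = c := by
      funext i; simp [toCols, hω]
    simp only [Finset.mem_filter, Finset.mem_univ, true_and]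
    refine ⟨⟨?_, fun j hj => ?_⟩, ?_⟩
    · rw [blackCount_eq, hcols]; omega
    · show whiteCount n ω j ≤ blackCount n ω j
      have h2 := black_add_white n ω j hj
      have h3 : blackCount n ω j = pSum c j := by rw [blackCount_eq, hcols]
      have := hpos j hj
      omega
    · rw [topBlack_eq, hcols, htop]
  · intro ω _
    funext p
    rcases p with ⟨i, b⟩
    cases b <;> rfl
  · intro c _
    funext i
    simp [toCols]

lemma ich_natCast (n t : ℕ) : ich n (t : ℤ) = (n.choose t : ℤ) := by
  unfold ich
  rw [if_pos (Int.natCast_nonneg t), Int.toNat_natCast]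

/-- The number of complete configurations of length `n` with `k` black and `m` white
particles in the top row is `(1/(n+1)) * binomial (n+1) k * binomial (n+1) m`. -/
theorem stmt1 (n k m : ℕ) (h : k + m = n) :
    ((Finset.univ : Finset (Fin n × Bool → Bool)).filter
        (fun ω => IsCompleteCfg n ω ∧ topBlack n ω = k)).card * (n + 1)
      = Nat.choose (n + 1) k * Nat.choose (n + 1) m := by
  rw [main_card_eq n k]
  have key : ((cfg n k 0).card : ℤ) * ((n : ℤ) + 1)
      = (Nat.choose (n+1) k : ℤ) * (Nat.choose (n+1) m : ℤ) := by
    rw [cfg_card n k 0]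
    unfold F
    simp only [Nat.cast_zero, sub_zero]
    rw [show (n : ℤ) - k = (m : ℤ) by push_cast [← h]; ring]
    rw [ich_natCast n k, ich_natCast n m]
    rcases k with _ | k'
    · rw [show ((0:ℕ) : ℤ) - 1 = -1 by norm_num]
      unfold ich
      rw [if_neg (show ¬ (0:ℤ) ≤ -1 by norm_num)]
      have hm : m = n := by omega
      rw [Nat.choose_zero_right, Nat.choose_zero_right, hm, Nat.choose_self]
      rw [show (n+1).choose n = n + 1 from by
        rw [← Nat.choose_symm (show n ≤ n + 1 by omega)]
        simp [Nat.choose_one_right]]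
      push_cast; ring
    · rcases m with _ | m'
      · rw [show ((0:ℕ) : ℤ) - 1 = -1 by norm_num]
        rw [show ((k'+1 : ℕ) : ℤ) - 1 = ((k' : ℕ) : ℤ) by push_cast; ring]
        rw [ich_natCast n k']
        unfold ich
        rw [if_neg (show ¬ (0:ℤ) ≤ -1 by norm_num)]
        have hk : k' + 1 = n := by omega
        rw [Nat.choose_zero_right, Nat.choose_zero_right, hk, Nat.choose_self]
        rw [show (n+1).choose n = n + 1 from by
          rw [← Nat.choose_symm (show n ≤ n + 1 by omega)]
          simp [Nat.choose_one_right]]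
        push_cast; ring
      · -- both positive
        rw [show ((k'+1 : ℕ) : ℤ) - 1 = ((k' : ℕ) : ℤ) by push_cast; ring]
        rw [show ((m'+1 : ℕ) : ℤ) - 1 = ((m' : ℕ) : ℤ) by push_cast; ring]
        rw [ich_natCast n k', ich_natCast n m']
        have hs : n.choose (m'+1) = n.choose (k'+1) := by
          rw [← Nat.choose_symm (show k' + 1 ≤ n by omega)]
          congr 1
          omega
        have f1 : (n.choose (k'+1) : ℤ) * ((m' : ℤ) + 1)
            = (n.choose m' : ℤ) * ((k' : ℤ) + 2) := by
          have h2 := Nat.choose_succ_right_eq n m'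
          rw [show n - m' = k' + 2 by omega, hs] at h2
          exact_mod_cast h2
        have f2 : (n.choose (k'+1) : ℤ) * ((k' : ℤ) + 1)
            = (n.choose k' : ℤ) * ((m' : ℤ) + 2) := by
          have h2 := Nat.choose_succ_right_eq n k'
          rw [show n - k' = m' + 2 by omega] at h2
          exact_mod_cast h2
        have p1 : (n+1).choose (k'+1) = n.choose k' + n.choose (k'+1) :=
          Nat.choose_succ_succ n k'
        have p2 : (n+1).choose (m'+1) = n.choose m' + n.choose (m'+1) :=
          Nat.choose_succ_succ n m'
        rw [p1, p2, hs]
        have hn : (n : ℤ) = (k' : ℤ) + (m' : ℤ) + 2 := by push_cast [← h]; ring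
        push_cast
        linear_combination ((n.choose (k'+1) : ℤ) + (n.choose k' : ℤ)) * f1
          + ((n.choose (k'+1) : ℤ) + (n.choose m' : ℤ)) * f2
          + ((n.choose (k'+1) : ℤ) * (n.choose (k'+1) : ℤ)
              - (n.choose k' : ℤ) * (n.choose m' : ℤ)) * hn
  exact_mod_cast key
end

section
/- Complete configurations of length n are in bijection with bicolored Motzkin paths of length n, where a column with two black particles corresponds to an up step, a column with two white particles to a down step, and the two mixed columns to the two colors of level steps; consequently the number of complete configurations of length n equals the number of Dyck paths of length 2n+2. -/
open Finset

/-- In a bicolored Motzkin path encoded by columns `(true,true)` = up step,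
`(false,false)` = down step, and the two mixed columns = the two colors of level
steps: number of up steps among the first `j` steps. -/
def upCount (n : ℕ) (p : Fin n → Bool × Bool) (j : ℕ) : ℕ :=
  ((Finset.univ : Finset (Fin n)).filter (fun i => i.val < j ∧ p i = (true, true))).card

def downCount (n : ℕ) (p : Fin n → Bool × Bool) (j : ℕ) : ℕ :=
  ((Finset.univ : Finset (Fin n)).filter (fun i => i.val < j ∧ p i = (false, false))).card

/-- Bicolored Motzkin path: stays weakly above the axis and returns to height 0. -/
def IsBicoloredMotzkin (n : ℕ) (p : Fin n → Bool × Bool) : Prop :=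
  (∀ j ≤ n, downCount n p j ≤ upCount n p j) ∧ upCount n p n = downCount n p n

instance (n : ℕ) : DecidablePred (IsBicoloredMotzkin n) := fun p => by
  unfold IsBicoloredMotzkin; infer_instance

/-- A Dyck path of length `N`: `true` = up step, `false` = down step. -/
def IsDyck (N : ℕ) (d : Fin N → Bool) : Prop :=
  (∀ j ≤ N,
      ((Finset.univ : Finset (Fin N)).filter (fun i => i.val < j ∧ d i = false)).card ≤
        ((Finset.univ : Finset (Fin N)).filter (fun i => i.val < j ∧ d i = true)).card) ∧
  2 * ((Finset.univ : Finset (Fin N)).filter (fun i => d i = true)).card = N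

instance (N : ℕ) : DecidablePred (IsDyck N) := fun d => by
  unfold IsDyck; infer_instance

section aux
variable {α : Type*} [Fintype α]

lemma count_split (ℓ : α → ℕ) (P : α → Prop) [DecidablePred P] (j : ℕ) :
    (univ.filter fun a => ℓ a < j + 1 ∧ P a).card
      = (univ.filter fun a => ℓ a < j ∧ P a).card
        + (univ.filter fun a => ℓ a = j ∧ P a).card := by
  rw [Finset.card_filter, Finset.card_filter, Finset.card_filter, ← Finset.sum_add_distrib]
  refine Finset.sum_congr rfl fun a _ => ?_
  by_cases h3 : P a
  · simp only [h3, and_true]; split_ifs <;> omega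
  · simp [h3]

lemma count_full (ℓ : α → ℕ) (P : α → Prop) [DecidablePred P] {j : ℕ}
    (h : ∀ a, ℓ a < j) :
    (univ.filter fun a => ℓ a < j ∧ P a) = univ.filter P :=
  filter_congr fun a _ => by simp [h a]

end aux

lemma level_fin {N : ℕ} (P : Fin N → Prop) [DecidablePred P] {j : ℕ} (hj : j < N) :
    (univ.filter fun i : Fin N => i.val = j ∧ P i).card = if P ⟨j, hj⟩ then 1 else 0 := by
  rw [Finset.card_filter, Finset.sum_eq_single (⟨j, hj⟩ : Fin N)]
  · simp
  · intro b _ hb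
    have : b.val ≠ j := fun h => hb (Fin.ext h)
    simp [this]
  · intro h; exact absurd (mem_univ _) h

lemma level_prod {n : ℕ} (P : Fin n × Bool → Prop) [DecidablePred P] {j : ℕ} (hj : j < n) :
    (univ.filter fun p : Fin n × Bool => p.1.val = j ∧ P p).card
      = (if P (⟨j, hj⟩, true) then 1 else 0) + (if P (⟨j, hj⟩, false) then 1 else 0) := by
  rw [Finset.card_filter, Fintype.sum_prod_type]
  rw [Finset.sum_eq_single (⟨j, hj⟩ : Fin n)]
  · rw [Fintype.sum_bool]; simp
  · intro b _ hb
    have : b.val ≠ j := fun h => hb (Fin.ext h)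
    simp [this]
  · intro h; exact absurd (mem_univ _) h


-- up/down counts of a Bool path
def uc {N : ℕ} (d : Fin N → Bool) (j : ℕ) : ℕ :=
  ((Finset.univ : Finset (Fin N)).filter (fun i => i.val < j ∧ d i = true)).card
def dc {N : ℕ} (d : Fin N → Bool) (j : ℕ) : ℕ :=
  ((Finset.univ : Finset (Fin N)).filter (fun i => i.val < j ∧ d i = false)).card

lemma uc_succ {N : ℕ} (d : Fin N → Bool) {j : ℕ} (hj : j < N) :
    uc d (j + 1) = uc d j + if d ⟨j, hj⟩ = true then 1 else 0 := by
  unfold uc; rw [count_split (fun i : Fin N => i.val), level_fin _ hj]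
lemma dc_succ {N : ℕ} (d : Fin N → Bool) {j : ℕ} (hj : j < N) :
    dc d (j + 1) = dc d j + if d ⟨j, hj⟩ = false then 1 else 0 := by
  unfold dc; rw [count_split (fun i : Fin N => i.val), level_fin _ hj]
lemma uc_zero {N : ℕ} (d : Fin N → Bool) : uc d 0 = 0 := by simp [uc]
lemma dc_zero {N : ℕ} (d : Fin N → Bool) : dc d 0 = 0 := by simp [dc]

lemma ucdc_total {N : ℕ} (d : Fin N → Bool) : ∀ j ≤ N, uc d j + dc d j = j := by
  intro j hj
  induction j with
  | zero => simp [uc_zero, dc_zero]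
  | succ j ih =>
    have hjN : j < N := hj
    rw [uc_succ d hjN, dc_succ d hjN]
    cases h : d ⟨j, hjN⟩ <;> simp [h] <;> omega

lemma uc_full {N : ℕ} (d : Fin N → Bool) {j : ℕ} (hj : N ≤ j) :
    uc d j = (Finset.univ.filter fun i : Fin N => d i = true).card := by
  unfold uc; rw [count_full (fun i : Fin N => i.val) _ fun a => lt_of_lt_of_le a.isLt hj]

lemma upCount_succ {n : ℕ} (p : Fin n → Bool × Bool) {j : ℕ} (hj : j < n) :
    upCount n p (j + 1) = upCount n p j + if p ⟨j, hj⟩ = (true, true) then 1 else 0 := by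
  unfold upCount; rw [count_split (fun i : Fin n => i.val), level_fin _ hj]
lemma downCount_succ {n : ℕ} (p : Fin n → Bool × Bool) {j : ℕ} (hj : j < n) :
    downCount n p (j + 1) = downCount n p j + if p ⟨j, hj⟩ = (false, false) then 1 else 0 := by
  unfold downCount; rw [count_split (fun i : Fin n => i.val), level_fin _ hj]
lemma upCount_zero {n : ℕ} (p : Fin n → Bool × Bool) : upCount n p 0 = 0 := by simp [upCount]
lemma downCount_zero {n : ℕ} (p : Fin n → Bool × Bool) : downCount n p 0 = 0 := by
  simp [downCount]

lemma blackCount_succ {n : ℕ} (ω : Fin n × Bool → Bool) {j : ℕ} (hj : j < n) :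
    blackCount n ω (j + 1) = blackCount n ω j
      + ((if ω (⟨j, hj⟩, true) = true then 1 else 0)
        + (if ω (⟨j, hj⟩, false) = true then 1 else 0)) := by
  unfold blackCount
  rw [count_split (fun q : Fin n × Bool => q.1.val), level_prod _ hj]
lemma whiteCount_succ {n : ℕ} (ω : Fin n × Bool → Bool) {j : ℕ} (hj : j < n) :
    whiteCount n ω (j + 1) = whiteCount n ω j
      + ((if ω (⟨j, hj⟩, true) = false then 1 else 0)
        + (if ω (⟨j, hj⟩, false) = false then 1 else 0)) := by
  unfold whiteCount
  rw [count_split (fun q : Fin n × Bool => q.1.val), level_prod _ hj]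
lemma blackCount_zero {n : ℕ} (ω : Fin n × Bool → Bool) : blackCount n ω 0 = 0 := by
  simp [blackCount]
lemma whiteCount_zero {n : ℕ} (ω : Fin n × Bool → Bool) : whiteCount n ω 0 = 0 := by
  simp [whiteCount]

lemma bw_total {n : ℕ} (ω : Fin n × Bool → Bool) : ∀ j ≤ n,
    blackCount n ω j + whiteCount n ω j = 2 * j := by
  intro j hj
  induction j with
  | zero => simp [blackCount_zero, whiteCount_zero]
  | succ j ih =>
    have hjn : j < n := hj
    rw [blackCount_succ ω hjn, whiteCount_succ ω hjn]
    cases h1 : ω (⟨j, hjn⟩, true) <;> cases h2 : ω (⟨j, hjn⟩, false) <;>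
      simp [h1, h2] <;> omega


def toPath {n : ℕ} (ω : Fin n × Bool → Bool) : Fin n → Bool × Bool :=
  fun i => (ω (i, true), ω (i, false))

lemma key1 {n : ℕ} (ω : Fin n × Bool → Bool) : ∀ j ≤ n,
    blackCount n ω j + 2 * downCount n (toPath ω) j
      = whiteCount n ω j + 2 * upCount n (toPath ω) j := by
  intro j hj
  induction j with
  | zero => simp [blackCount_zero, whiteCount_zero, upCount_zero, downCount_zero]
  | succ j ih =>
    have hjn : j < n := hj
    rw [blackCount_succ ω hjn, whiteCount_succ ω hjn, upCount_succ _ hjn,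
      downCount_succ _ hjn]
    have ih' := ih (le_of_lt hjn)
    cases h1 : ω (⟨j, hjn⟩, true) <;> cases h2 : ω (⟨j, hjn⟩, false) <;>
      simp [toPath, h1, h2] <;> omega

lemma transfer {n : ℕ} (ω : Fin n × Bool → Bool) :
    IsCompleteCfg n ω ↔ IsBicoloredMotzkin n (toPath ω) := by
  have key := key1 ω
  have tot := bw_total ω n le_rfl
  constructor
  · rintro ⟨h1, h2⟩
    constructor
    · intro j hj; have := key j hj; have := h2 j hj; omega
    · have := key n le_rfl; omega
  · rintro ⟨h1, h2⟩
    constructor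
    · have := key n le_rfl; omega
    · intro j hj; have := key j hj; have := h1 j hj; omega

def colEquiv (n : ℕ) : (Fin n × Bool → Bool) ≃ (Fin n → Bool × Bool) where
  toFun := toPath
  invFun p q := if q.2 then (p q.1).1 else (p q.1).2
  left_inv ω := by funext q; rcases q with ⟨i, b⟩; cases b <;> simp [toPath]
  right_inv p := by funext i; simp [toPath]

def cfgEquiv (n : ℕ) :
    {ω : Fin n × Bool → Bool // IsCompleteCfg n ω}
      ≃ {p : Fin n → Bool × Bool // IsBicoloredMotzkin n p} :=
  (colEquiv n).subtypeEquiv fun ω => transfer ω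

example (n : ℕ) : ∀ (ω : {ω : Fin n × Bool → Bool // IsCompleteCfg n ω}) i,
    ((cfgEquiv n) ω).1 i = (ω.1 (i, true), ω.1 (i, false)) := fun _ _ => rfl


def pe {n : ℕ} (p : Fin n → Bool × Bool) (i : ℕ) : Bool × Bool :=
  if h : i < n then p ⟨i, h⟩ else (true, true)

def toDyck (n : ℕ) (p : Fin n → Bool × Bool) : Fin (2 * n + 2) → Bool := fun k =>
  if k.val = 0 then true
  else if k.val = 2 * n + 1 then false
  else if (k.val - 1) % 2 = 0 then (pe p ((k.val - 1) / 2)).1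
  else (pe p ((k.val - 1) / 2)).2

def toMotz (n : ℕ) (d : Fin (2 * n + 2) → Bool) : Fin n → Bool × Bool := fun i =>
  (d ⟨2 * i.val + 1, by omega⟩, d ⟨2 * i.val + 2, by omega⟩)

lemma toDyck_zero {n : ℕ} (p : Fin n → Bool × Bool) (k : Fin (2 * n + 2))
    (h : k.val = 0) : toDyck n p k = true := by simp [toDyck, h]

lemma toDyck_last {n : ℕ} (p : Fin n → Bool × Bool) (k : Fin (2 * n + 2))
    (h : k.val = 2 * n + 1) : toDyck n p k = false := by
  have h0 : ¬ k.val = 0 := by omega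
  simp [toDyck, h0, h]

lemma toDyck_odd {n : ℕ} (p : Fin n → Bool × Bool) (k : Fin (2 * n + 2)) {j : ℕ}
    (hj : j < n) (h : k.val = 2 * j + 1) : toDyck n p k = (p ⟨j, hj⟩).1 := by
  have h0 : ¬ k.val = 0 := by omega
  have h1 : ¬ k.val = 2 * n + 1 := by omega
  have h2 : (k.val - 1) % 2 = 0 := by omega
  have h3 : (k.val - 1) / 2 = j := by omega
  simp [toDyck, h0, h1, h2, h3, pe, hj]

lemma toDyck_even {n : ℕ} (p : Fin n → Bool × Bool) (k : Fin (2 * n + 2)) {j : ℕ}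
    (hj : j < n) (h : k.val = 2 * j + 2) : toDyck n p k = (p ⟨j, hj⟩).2 := by
  have h0 : ¬ k.val = 0 := by omega
  have h1 : ¬ k.val = 2 * n + 1 := by omega
  have h2 : ¬ (k.val - 1) % 2 = 0 := by omega
  have h3 : (k.val - 1) / 2 = j := by omega
  simp [toDyck, h0, h1, h2, h3, pe, hj]

/-- partial sum of black particles per column -/
def ps {n : ℕ} (p : Fin n → Bool × Bool) (j : ℕ) : ℕ :=
  ∑ i ∈ Finset.range j, ((pe p i).1.toNat + (pe p i).2.toNat)

lemma ps_succ {n : ℕ} (p : Fin n → Bool × Bool) {j : ℕ} (hj : j < n) :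
    ps p (j + 1) = ps p j + ((p ⟨j, hj⟩).1.toNat + (p ⟨j, hj⟩).2.toNat) := by
  unfold ps
  rw [Finset.sum_range_succ]
  simp [pe, hj]

-- invariant C : relating ps to up/down counts of the Motzkin path
lemma keyC {n : ℕ} (p : Fin n → Bool × Bool) : ∀ j ≤ n,
    ps p j + downCount n p j = upCount n p j + j := by
  intro j hj
  induction j with
  | zero => simp [ps, upCount_zero, downCount_zero]
  | succ j ih =>
    have hjn : j < n := hj
    have ih' := ih (le_of_lt hjn)
    rw [ps_succ p hjn, upCount_succ _ hjn, downCount_succ _ hjn]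
    rcases hp : p ⟨j, hjn⟩ with ⟨a, b⟩
    cases a <;> cases b <;> simp [hp] <;> omega

-- invariant A : up-count of toDyck at odd positions
lemma keyA {n : ℕ} (p : Fin n → Bool × Bool) : ∀ j ≤ n,
    uc (toDyck n p) (2 * j + 1) = 1 + ps p j := by
  intro j hj
  induction j with
  | zero =>
    have h0 : (0 : ℕ) < 2 * n + 2 := by omega
    rw [show 2 * 0 + 1 = 0 + 1 by ring, uc_succ _ h0, uc_zero,
      toDyck_zero p ⟨0, h0⟩ rfl]
    simp [ps]
  | succ j ih =>
    have hjn : j < n := hj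
    have ih' := ih (le_of_lt hjn)
    have hA : (2 * j + 1 : ℕ) < 2 * n + 2 := by omega
    have hB : (2 * j + 1 + 1 : ℕ) < 2 * n + 2 := by omega
    rw [show 2 * (j + 1) + 1 = (2 * j + 1) + 1 + 1 by ring, uc_succ _ hB,
      uc_succ _ hA, toDyck_odd p _ hjn rfl, toDyck_even p ⟨2 * j + 1 + 1, hB⟩ hjn rfl,
      ps_succ p hjn]
    cases h1 : (p ⟨j, hjn⟩).1 <;> cases h2 : (p ⟨j, hjn⟩).2 <;> simp [h1, h2] <;> omega


lemma uc_mono {N : ℕ} (d : Fin N → Bool) {j k : ℕ} (h : j ≤ k) : uc d j ≤ uc d k := by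
  apply Finset.card_le_card
  intro i hi
  simp only [Finset.mem_filter, Finset.mem_univ, true_and] at *
  exact ⟨lt_of_lt_of_le hi.1 h, hi.2⟩

lemma ps_n {n : ℕ} {p : Fin n → Bool × Bool} (hp : IsBicoloredMotzkin n p) :
    ps p n = n := by
  have := keyC p n le_rfl
  have := hp.2
  omega

lemma toDyck_isDyck {n : ℕ} {p : Fin n → Bool × Bool} (hp : IsBicoloredMotzkin n p) :
    IsDyck (2 * n + 2) (toDyck n p) := by
  have hucA : ∀ m ≤ n, uc (toDyck n p) (2 * m + 1) = 1 + ps p m := keyA p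
  constructor
  · intro j hj
    show dc (toDyck n p) j ≤ uc (toDyck n p) j
    have tot := ucdc_total (toDyck n p) j hj
    rcases Nat.eq_zero_or_pos j with h0 | h0
    · subst h0; rw [uc_zero, dc_zero]
    obtain ⟨m, hm⟩ : ∃ m, m ≤ n ∧ 2 * m + 1 ≤ j ∧ j ≤ 2 * m + 2 :=
      ⟨(j - 1) / 2, by omega⟩
    have h1 : uc (toDyck n p) (2 * m + 1) ≤ uc (toDyck n p) j := uc_mono _ hm.2.1
    have h2 := hucA m hm.1
    have h3 := keyC p m hm.1
    have h4 := hp.1 m hm.1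
    omega
  · show 2 * ((Finset.univ : Finset (Fin (2 * n + 2))).filter
        (fun i => toDyck n p i = true)).card = 2 * n + 2
    have hA : (2 * n + 1 : ℕ) < 2 * n + 2 := by omega
    have e := uc_succ (toDyck n p) hA
    rw [toDyck_last p _ rfl] at e
    have e2 := hucA n le_rfl
    have e3 := ps_n hp
    have e4 : uc (toDyck n p) (2 * n + 1 + 1)
        = ((Finset.univ : Finset (Fin (2 * n + 2))).filter
            (fun i => toDyck n p i = true)).card := by
      unfold uc
      rw [count_full (fun i : Fin (2 * n + 2) => i.val) _ (fun a => by show a.val < _; have := a.isLt; omega)]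
    simp at e
    omega

lemma dyck_prefix {N : ℕ} {d : Fin N → Bool} (hd : IsDyck N d) :
    ∀ j ≤ N, dc d j ≤ uc d j := hd.1

lemma dyck_first {n : ℕ} {d : Fin (2 * n + 2) → Bool} (hd : IsDyck (2 * n + 2) d) :
    ∀ h0 : (0 : ℕ) < 2 * n + 2, d ⟨0, h0⟩ = true := by
  intro h0
  have e := uc_succ d h0
  have e2 := dc_succ d h0
  have h1 : dc d 1 ≤ uc d 1 := dyck_prefix hd 1 (by omega)
  rw [uc_zero] at e
  rw [dc_zero] at e2
  cases h : d ⟨0, h0⟩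
  · exfalso; rw [h] at e e2; simp at e e2; omega
  · rfl

lemma dyck_ucfull {n : ℕ} {d : Fin (2 * n + 2) → Bool} (hd : IsDyck (2 * n + 2) d) :
    uc d (2 * n + 1 + 1) = n + 1 := by
  have h2 := hd.2
  have e4 : uc d (2 * n + 1 + 1)
      = ((Finset.univ : Finset (Fin (2 * n + 2))).filter (fun i => d i = true)).card := by
    unfold uc
    rw [count_full (fun i : Fin (2 * n + 2) => i.val) _ (fun a => by show a.val < _; have := a.isLt; omega)]
  omega

lemma dyck_last {n : ℕ} {d : Fin (2 * n + 2) → Bool} (hd : IsDyck (2 * n + 2) d) :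
    ∀ hA : (2 * n + 1 : ℕ) < 2 * n + 2, d ⟨2 * n + 1, hA⟩ = false := by
  intro hA
  have e := uc_succ d hA
  have h1 : dc d (2 * n + 1) ≤ uc d (2 * n + 1) := dyck_prefix hd _ (by omega)
  have tot := ucdc_total d (2 * n + 1) (by omega)
  have full := dyck_ucfull hd
  cases h : d ⟨2 * n + 1, hA⟩
  · rfl
  · exfalso; rw [h] at e; simp at e; omega

lemma keyA' {n : ℕ} {d : Fin (2 * n + 2) → Bool}
    (hfirst : ∀ h0 : (0 : ℕ) < 2 * n + 2, d ⟨0, h0⟩ = true) :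
    ∀ j ≤ n, uc d (2 * j + 1) = 1 + ps (toMotz n d) j := by
  intro j hj
  induction j with
  | zero =>
    have h0 : (0 : ℕ) < 2 * n + 2 := by omega
    rw [show 2 * 0 + 1 = 0 + 1 by ring, uc_succ _ h0, uc_zero, hfirst h0]
    simp [ps]
  | succ j ih =>
    have hjn : j < n := hj
    have ih' := ih (le_of_lt hjn)
    have hA : (2 * j + 1 : ℕ) < 2 * n + 2 := by omega
    have hB : (2 * j + 1 + 1 : ℕ) < 2 * n + 2 := by omega
    rw [show 2 * (j + 1) + 1 = (2 * j + 1) + 1 + 1 by ring, uc_succ _ hB,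
      uc_succ _ hA, ps_succ _ hjn]
    have e1 : d ⟨2 * j + 1, hA⟩ = ((toMotz n d) ⟨j, hjn⟩).1 := rfl
    have e2 : d ⟨2 * j + 1 + 1, hB⟩ = ((toMotz n d) ⟨j, hjn⟩).2 := rfl
    rw [e1, e2]
    cases h1 : ((toMotz n d) ⟨j, hjn⟩).1 <;> cases h2 : ((toMotz n d) ⟨j, hjn⟩).2 <;>
      simp [h1, h2] <;> omega

lemma toMotz_isMotz {n : ℕ} {d : Fin (2 * n + 2) → Bool} (hd : IsDyck (2 * n + 2) d) :
    IsBicoloredMotzkin n (toMotz n d) := by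
  have hA' := keyA' (dyck_first hd)
  have hC := keyC (toMotz n d)
  constructor
  · intro j hj
    have h1 := hA' j hj
    have h2 := hC j hj
    have h3 := dyck_prefix hd (2 * j + 1) (by omega)
    have tot := ucdc_total d (2 * j + 1) (by omega)
    omega
  · have h1 := hA' n le_rfl
    have h2 := hC n le_rfl
    have hA : (2 * n + 1 : ℕ) < 2 * n + 2 := by omega
    have e := uc_succ d hA
    rw [dyck_last hd hA] at e
    have full := dyck_ucfull hd
    simp at e
    omega

lemma motz_dyck {n : ℕ} (p : Fin n → Bool × Bool) : toMotz n (toDyck n p) = p := by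
  funext i
  unfold toMotz
  rw [toDyck_odd p _ i.isLt rfl, toDyck_even p _ i.isLt rfl]

lemma dyck_motz {n : ℕ} {d : Fin (2 * n + 2) → Bool} (hd : IsDyck (2 * n + 2) d) :
    toDyck n (toMotz n d) = d := by
  funext k
  by_cases h0 : k.val = 0
  · rw [toDyck_zero _ _ h0]
    have hk : k = ⟨0, by omega⟩ := Fin.ext h0
    rw [hk, dyck_first hd]
  by_cases h1 : k.val = 2 * n + 1
  · rw [toDyck_last _ _ h1]
    have hk : k = ⟨2 * n + 1, by omega⟩ := Fin.ext h1
    rw [hk, dyck_last hd]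
  obtain ⟨j, hjn, hj⟩ : ∃ j, j < n ∧ (k.val = 2 * j + 1 ∨ k.val = 2 * j + 2) := by
    have := k.isLt
    exact ⟨(k.val - 1) / 2, by omega, by omega⟩
  rcases hj with hj | hj
  · rw [toDyck_odd (toMotz n d) k hjn hj]
    show d ⟨2 * j + 1, _⟩ = d k
    congr 1
    exact Fin.ext (by simpa using hj.symm)
  · rw [toDyck_even (toMotz n d) k hjn hj]
    show d ⟨2 * j + 2, _⟩ = d k
    congr 1
    exact Fin.ext (by simpa using hj.symm)

def pathEquiv (n : ℕ) :
    {p : Fin n → Bool × Bool // IsBicoloredMotzkin n p}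
      ≃ {d : Fin (2 * n + 2) → Bool // IsDyck (2 * n + 2) d} where
  toFun x := ⟨toDyck n x.1, toDyck_isDyck x.2⟩
  invFun y := ⟨toMotz n y.1, toMotz_isMotz y.2⟩
  left_inv x := Subtype.ext (motz_dyck x.1)
  right_inv y := Subtype.ext (dyck_motz y.2)


/-- Complete configurations of length `n` are in bijection with bicolored Motzkin paths
of length `n`, the column of a configuration (top, bottom) giving the step;
consequently their number equals the number of Dyck paths of length `2n+2`. -/
theorem stmt2 (n : ℕ) :
    (∃ e : {ω : Fin n × Bool → Bool // IsCompleteCfg n ω} ≃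
        {p : Fin n → Bool × Bool // IsBicoloredMotzkin n p},
      ∀ ω i, (e ω).1 i = (ω.1 (i, true), ω.1 (i, false)))
    ∧ ((Finset.univ : Finset (Fin n × Bool → Bool)).filter
          (fun ω => IsCompleteCfg n ω)).card
        = ((Finset.univ : Finset (Fin (2 * n + 2) → Bool)).filter
            (fun d => IsDyck (2 * n + 2) d)).card := by
  constructor
  · exact ⟨cfgEquiv n, fun ω i => rfl⟩
  · have h := Fintype.card_congr ((cfgEquiv n).trans (pathEquiv n))
    rw [Fintype.card_subtype, Fintype.card_subtype] at h
    exact h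
end

section
/- For k + ℓ + m = n, the number of 3-TASEP complete configurations of length n with ℓ columns of neutral particles and with k black and m white particles in the top row equals ((ℓ+1)/(n+1)) * binomial(n+1, k) * binomial(n+1, m). -/
open Finset

-- Cells contain `some true` = black, `some false` = white, `none` = neutral.

/-- Number of black particles among the first `j` columns (both rows). -/
def bC (n : ℕ) (ω : Fin n × Bool → Option Bool) (j : ℕ) : ℕ :=
  ((Finset.univ : Finset (Fin n × Bool)).filter
    (fun p => p.1.val < j ∧ ω p = some true)).card

/-- Number of white particles among the first `j` columns (both rows). -/
def wC (n : ℕ) (ω : Fin n × Bool → Option Bool) (j : ℕ) : ℕ :=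
  ((Finset.univ : Finset (Fin n × Bool)).filter
    (fun p => p.1.val < j ∧ ω p = some false)).card

/-- A 3-TASEP complete configuration: neutral particles occupy full columns; the
black/white blocks between consecutive neutral columns are balanced (equal numbers
of black and white particles) and prefix-positive.  Equivalently: the prefix
difference `bC - wC` is nonnegative everywhere, vanishes at the right end, and
vanishes at the wall before every neutral column. -/
def IsComplete3 (n : ℕ) (ω : Fin n × Bool → Option Bool) : Prop :=
  (∀ i : Fin n, (ω (i, true) = none ↔ ω (i, false) = none)) ∧
  bC n ω n = wC n ω n ∧
  (∀ j ≤ n, wC n ω j ≤ bC n ω j) ∧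
  (∀ i : Fin n, ω (i, true) = none → bC n ω i.val = wC n ω i.val)

instance (n : ℕ) : DecidablePred (IsComplete3 n) := fun ω => by
  unfold IsComplete3; infer_instance

/-- Number of neutral columns. -/
def neutCount (n : ℕ) (ω : Fin n × Bool → Option Bool) : ℕ :=
  ((Finset.univ : Finset (Fin n)).filter (fun i => ω (i, true) = none)).card

/-- Number of black particles in the top row. -/
def topB (n : ℕ) (ω : Fin n × Bool → Option Bool) : ℕ :=
  ((Finset.univ : Finset (Fin n)).filter (fun i => ω (i, true) = some true)).card

/-- Number of white particles in the top row. -/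
def topW (n : ℕ) (ω : Fin n × Bool → Option Bool) : ℕ :=
  ((Finset.univ : Finset (Fin n)).filter (fun i => ω (i, true) = some false)).card

namespace T3aux
variable {n : ℕ}

/-- number of elements of `A` with index `< j` -/
def pfx (A : Finset (Fin n)) (j : ℕ) : ℕ := (A.filter fun i => i.val < j).card
/-- number of elements of `A` with index `≥ j` -/
def sfx (A : Finset (Fin n)) (j : ℕ) : ℕ := (A.filter fun i => j ≤ i.val).card

lemma pfx_zero (A : Finset (Fin n)) : pfx A 0 = 0 := by
  simp [pfx]

lemma sfx_top (A : Finset (Fin n)) {j : ℕ} (hj : n ≤ j) : sfx A j = 0 := by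
  simp only [sfx, Finset.card_eq_zero]
  apply Finset.filter_false_of_mem
  intro i _
  have := i.isLt
  omega

lemma pfx_add_sfx (A : Finset (Fin n)) (j : ℕ) : pfx A j + sfx A j = A.card := by
  classical
  have := Finset.card_filter_add_card_filter_not (s := A) (p := fun i : Fin n => i.val < j)
  simpa [pfx, sfx, not_lt] using this

lemma filter_eq_single {A : Finset (Fin n)} (j : ℕ) (hj : j < n) :
    (A.filter fun i => i.val = j) = if (⟨j, hj⟩ : Fin n) ∈ A then {(⟨j, hj⟩ : Fin n)} else ∅ := by
  classical
  ext x
  by_cases hx : (⟨j, hj⟩ : Fin n) ∈ A <;>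
    simp only [Finset.mem_filter, hx, if_true, if_false, Finset.mem_singleton,
      Finset.notMem_empty, iff_false, Fin.ext_iff]
  · constructor
    · rintro ⟨_, h⟩; exact h
    · intro h
      have : x = ⟨j, hj⟩ := Fin.ext h
      subst this; exact ⟨hx, rfl⟩
  · rintro ⟨hxA, h⟩
    exact hx (by have : x = ⟨j, hj⟩ := Fin.ext h; rwa [this] at hxA)

lemma pfx_succ (A : Finset (Fin n)) (j : ℕ) (hj : j < n) :
    pfx A (j + 1) = pfx A j + (if (⟨j, hj⟩ : Fin n) ∈ A then 1 else 0) := by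
  classical
  have hsplit : (A.filter fun i => i.val < j + 1)
      = (A.filter fun i => i.val < j) ∪ (A.filter fun i => i.val = j) := by
    rw [← Finset.filter_or]
    apply Finset.filter_congr
    intro i _
    constructor <;> intro h <;> omega
  have hdisj : Disjoint (A.filter fun i => i.val < j) (A.filter fun i => i.val = j) := by
    apply Finset.disjoint_left.2
    intro a ha ha'
    simp only [Finset.mem_filter] at ha ha'
    omega
  rw [pfx, hsplit, Finset.card_union_of_disjoint hdisj, filter_eq_single j hj]
  rcases em ((⟨j, hj⟩ : Fin n) ∈ A) with hx | hx <;> simp [hx, pfx]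

lemma sfx_succ (A : Finset (Fin n)) (j : ℕ) (hj : j < n) :
    sfx A j = sfx A (j + 1) + (if (⟨j, hj⟩ : Fin n) ∈ A then 1 else 0) := by
  have h1 := pfx_add_sfx A j
  have h2 := pfx_add_sfx A (j + 1)
  have h3 := pfx_succ A j hj
  omega

lemma pfx_univ (j : ℕ) (hj : j ≤ n) : pfx (univ : Finset (Fin n)) j = j := by
  induction j with
  | zero => exact pfx_zero _
  | succ j ih =>
    rw [pfx_succ _ j (by omega), ih (by omega)]
    simp

lemma sfx_mono {A B : Finset (Fin n)} (hAB : A ⊆ B) (j : ℕ) : sfx A j ≤ sfx B j :=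
  Finset.card_le_card (Finset.filter_subset_filter _ hAB)

lemma sfx_union {A B : Finset (Fin n)} (hAB : Disjoint A B) (j : ℕ) :
    sfx (A ∪ B) j = sfx A j + sfx B j := by
  rw [sfx, Finset.filter_union, Finset.card_union_of_disjoint, sfx, sfx]
  exact Finset.disjoint_filter_filter hAB

lemma sfx_univ (j : ℕ) (hj : j ≤ n) : sfx (univ : Finset (Fin n)) j = n - j := by
  have h1 := pfx_add_sfx (univ : Finset (Fin n)) j
  rw [pfx_univ j hj] at h1
  simp only [Finset.card_univ, Fintype.card_fin] at h1
  omega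



variable {n : ℕ}

lemma rowsplit (Q : Fin n × Bool → Prop) [DecidablePred Q] :
    ((univ : Finset (Fin n × Bool)).filter Q).card
      = ((univ : Finset (Fin n)).filter fun i => Q (i, true)).card
        + ((univ : Finset (Fin n)).filter fun i => Q (i, false)).card := by
  rw [Finset.card_filter, Finset.card_filter, Finset.card_filter, Fintype.sum_prod_type,
    ← Finset.sum_add_distrib]
  apply Finset.sum_congr rfl
  intro i _
  rw [Fintype.sum_bool]

/-- positions whose (top/bottom according to `b`) cell has value `v` -/
def posSet (ω : Fin n × Bool → Option Bool) (b : Bool) (v : Option Bool) : Finset (Fin n) :=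
  (univ : Finset (Fin n)).filter fun i => ω (i, b) = v

lemma bC_eq (ω : Fin n × Bool → Option Bool) (j : ℕ) :
    bC n ω j = pfx (posSet ω true (some true)) j + pfx (posSet ω false (some true)) j := by
  rw [bC, rowsplit]
  unfold pfx posSet
  rw [Finset.filter_filter, Finset.filter_filter]
  congr 1 <;> · congr 1
                ext i
                simp only [Finset.mem_filter]
                tauto

lemma wC_eq (ω : Fin n × Bool → Option Bool) (j : ℕ) :
    wC n ω j = pfx (posSet ω true (some false)) j + pfx (posSet ω false (some false)) j := by
  rw [wC, rowsplit]
  unfold pfx posSet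
  rw [Finset.filter_filter, Finset.filter_filter]
  congr 1 <;> · congr 1
                ext i
                simp only [Finset.mem_filter]
                tauto



variable {n : ℕ}

lemma pfx_top (A : Finset (Fin n)) {j : ℕ} (hj : n ≤ j) : pfx A j = A.card := by
  have h1 := pfx_add_sfx A j
  rw [sfx_top A hj] at h1
  omega

lemma row_partition (ω : Fin n × Bool → Option Bool) (b : Bool) :
    (posSet ω b (some true)).card + (posSet ω b (some false)).card
      + (posSet ω b none).card = n := by
  unfold posSet
  rw [Finset.card_filter, Finset.card_filter, Finset.card_filter, ← Finset.sum_add_distrib,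
    ← Finset.sum_add_distrib]
  have : ∀ i : Fin n, ((if ω (i, b) = some true then 1 else 0)
      + (if ω (i, b) = some false then 1 else 0)) + (if ω (i, b) = none then 1 else 0) = 1 := by
    intro i
    rcases hv : ω (i, b) with _ | _ | _ <;> simp
  rw [Finset.sum_congr rfl fun i _ => this i]
  simp

/-- greedy height process -/
def gh (A B : Finset (Fin n)) : ℕ → ℕ
  | 0 => 0
  | j + 1 =>
    if hj : j < n then
      (if (⟨j, hj⟩ : Fin n) ∈ A then
        (if (⟨j, hj⟩ : Fin n) ∈ B then gh A B j + 1 else gh A B j)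
       else
        (if (⟨j, hj⟩ : Fin n) ∈ B then gh A B j else gh A B j - 1))
    else gh A B j

/-- the key quantity in the ballot-type condition -/
def dd (A B : Finset (Fin n)) (j : ℕ) : ℕ := sfx A j + sfx B j + j

lemma gh_bound (A B : Finset (Fin n)) (hP : ∀ j ≤ n, dd A B j ≤ n) :
    ∀ j ≤ n, gh A B j + sfx A j + sfx B j + j ≤ n := by
  intro j
  induction j with
  | zero =>
    intro _
    have := hP 0 (by omega)
    simpa [gh, dd] using this
  | succ j ih =>
    intro hj1
    have hj : j < n := by omega
    have hA := sfx_succ A j hj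
    have hB := sfx_succ B j hj
    have ihj := ih (by omega)
    by_cases hiA : (⟨j, hj⟩ : Fin n) ∈ A <;> by_cases hiB : (⟨j, hj⟩ : Fin n) ∈ B
    · rw [if_pos hiA] at hA; rw [if_pos hiB] at hB
      simp only [gh, dif_pos hj, if_pos hiA, if_pos hiB]
      omega
    · rw [if_pos hiA] at hA; rw [if_neg hiB] at hB
      simp only [gh, dif_pos hj, if_pos hiA, if_neg hiB]
      omega
    · rw [if_neg hiA] at hA; rw [if_pos hiB] at hB
      simp only [gh, dif_pos hj, if_neg hiA, if_pos hiB]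
      omega
    · rw [if_neg hiA] at hA; rw [if_neg hiB] at hB
      simp only [gh, dif_pos hj, if_neg hiA, if_neg hiB]
      rcases Nat.eq_zero_or_pos (gh A B j) with h0 | h0
      · have := hP (j + 1) (by omega)
        simp only [dd] at this
        omega
      · omega

lemma gh_final (A B : Finset (Fin n)) (hP : ∀ j ≤ n, dd A B j ≤ n) : gh A B n = 0 := by
  have := gh_bound A B hP n (le_refl n)
  omega

lemma mem_posSet {ω : Fin n × Bool → Option Bool} {b : Bool} {v : Option Bool} {i : Fin n} :
    i ∈ posSet ω b v ↔ ω (i, b) = v := by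
  simp [posSet]

lemma bC_zero (ω : Fin n × Bool → Option Bool) : bC n ω 0 = 0 := by
  simp [bC_eq, pfx_zero]

lemma wC_zero (ω : Fin n × Bool → Option Bool) : wC n ω 0 = 0 := by
  simp [wC_eq, pfx_zero]

lemma bC_succ (ω : Fin n × Bool → Option Bool) (j : ℕ) (hj : j < n) :
    bC n ω (j + 1) = bC n ω j + ((if ω (⟨j, hj⟩, true) = some true then 1 else 0)
      + (if ω (⟨j, hj⟩, false) = some true then 1 else 0)) := by
  rw [bC_eq, bC_eq, pfx_succ _ j hj, pfx_succ _ j hj]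
  simp only [mem_posSet]
  ring

lemma wC_succ (ω : Fin n × Bool → Option Bool) (j : ℕ) (hj : j < n) :
    wC n ω (j + 1) = wC n ω j + ((if ω (⟨j, hj⟩, true) = some false then 1 else 0)
      + (if ω (⟨j, hj⟩, false) = some false then 1 else 0)) := by
  rw [wC_eq, wC_eq, pfx_succ _ j hj, pfx_succ _ j hj]
  simp only [mem_posSet]
  ring

/-- configuration built from a pair of subsets (top blacks, bottom blacks) -/
def cfg (A B : Finset (Fin n)) : Fin n × Bool → Option Bool := fun p =>
  if p.2 then
    (if p.1 ∈ A then some true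
     else if p.1 ∈ B ∨ 0 < gh A B p.1.val then some false else none)
  else
    (if p.1 ∈ B then some true
     else if p.1 ∈ A ∨ 0 < gh A B p.1.val then some false else none)

lemma cfg_height (A B : Finset (Fin n)) :
    ∀ j ≤ n, bC n (cfg A B) j = wC n (cfg A B) j + 2 * gh A B j := by
  intro j
  induction j with
  | zero => intro _; simp [bC_zero, wC_zero, gh]
  | succ j ih =>
    intro hj1
    have hj : j < n := by omega
    have hb := bC_succ (cfg A B) j hj
    have hw := wC_succ (cfg A B) j hj
    have ihj := ih (by omega)
    by_cases hiA : (⟨j, hj⟩ : Fin n) ∈ A <;> by_cases hiB : (⟨j, hj⟩ : Fin n) ∈ B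
    · simp only [cfg, if_true, if_pos hiA, if_pos hiB] at hb hw
      simp only [gh, dif_pos hj, if_pos hiA, if_pos hiB]
      simp at hb hw
      omega
    · simp only [cfg, if_true, if_pos hiA, if_neg hiB, hiA, true_or, if_pos] at hb hw
      simp only [gh, dif_pos hj, if_pos hiA, if_neg hiB]
      simp at hb hw
      omega
    · simp only [cfg, if_true, if_neg hiA, if_pos hiB, hiB, true_or, if_pos] at hb hw
      simp only [gh, dif_pos hj, if_neg hiA, if_pos hiB]
      simp at hb hw
      omega
    · rcases Nat.eq_zero_or_pos (gh A B j) with h0 | h0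
      · simp only [cfg, if_true, if_neg hiA, if_neg hiB, h0, lt_irrefl, or_false,
          if_neg (by simp [hiA, hiB, h0] : ¬((⟨j, hj⟩ : Fin n) ∈ B ∨ 0 < gh A B j)),
          if_neg (by simp [hiA, hiB, h0] : ¬((⟨j, hj⟩ : Fin n) ∈ A ∨ 0 < gh A B j))] at hb hw
        simp only [gh, dif_pos hj, if_neg hiA, if_neg hiB]
        simp at hb hw
        omega
      · simp only [cfg, if_true, if_neg hiA, if_neg hiB,
          if_pos (Or.inr h0 : (⟨j, hj⟩ : Fin n) ∈ B ∨ 0 < gh A B j),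
          if_pos (Or.inr h0 : (⟨j, hj⟩ : Fin n) ∈ A ∨ 0 < gh A B j)] at hb hw
        simp only [gh, dif_pos hj, if_neg hiA, if_neg hiB]
        simp at hb hw
        omega

lemma cfg_top_none {A B : Finset (Fin n)} {i : Fin n} :
    cfg A B (i, true) = none ↔ (i ∉ A ∧ i ∉ B ∧ gh A B i.val = 0) := by
  by_cases hiA : i ∈ A
  · simp [cfg, hiA]
  · by_cases hc : i ∈ B ∨ 0 < gh A B i.val
    · simp only [cfg, if_true, if_neg hiA, if_pos hc]
      simp only [reduceCtorEq, false_iff]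
      rintro ⟨h1, h2, h3⟩
      rcases hc with hc | hc
      · exact h2 hc
      · omega
    · push_neg at hc
      have hc' : ¬(i ∈ B ∨ 0 < gh A B i.val) := by push_neg; exact ⟨hc.1, hc.2⟩
      simp only [cfg, if_true, if_neg hiA, if_neg hc']
      simp only [true_iff]
      exact ⟨hiA, hc.1, by omega⟩

lemma cfg_bot_none {A B : Finset (Fin n)} {i : Fin n} :
    cfg A B (i, false) = none ↔ (i ∉ A ∧ i ∉ B ∧ gh A B i.val = 0) := by
  by_cases hiB : i ∈ B
  · simp [cfg, hiB]
  · by_cases hc : i ∈ A ∨ 0 < gh A B i.val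
    · simp only [cfg, Bool.false_eq_true, if_false, if_neg hiB, if_pos hc]
      simp only [reduceCtorEq, false_iff]
      rintro ⟨h1, h2, h3⟩
      rcases hc with hc | hc
      · exact h1 hc
      · omega
    · push_neg at hc
      have hc' : ¬(i ∈ A ∨ 0 < gh A B i.val) := by push_neg; exact ⟨hc.1, hc.2⟩
      simp only [cfg, Bool.false_eq_true, if_false, if_neg hiB, if_neg hc']
      simp only [true_iff]
      exact ⟨hc.1, hiB, by omega⟩

lemma cfg_complete (A B : Finset (Fin n)) (hP : ∀ j ≤ n, dd A B j ≤ n) :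
    IsComplete3 n (cfg A B) := by
  have hfin := gh_final A B hP
  refine ⟨fun i => by rw [cfg_top_none, cfg_bot_none], ?_, ?_, ?_⟩
  · have := cfg_height A B n (le_refl n)
    rw [hfin] at this
    omega
  · intro j hj
    have := cfg_height A B j hj
    omega
  · intro i hnone
    rw [cfg_top_none] at hnone
    have := cfg_height A B i.val (le_of_lt i.isLt)
    rw [hnone.2.2] at this
    omega

lemma cfg_posTB (A B : Finset (Fin n)) : posSet (cfg A B) true (some true) = A := by
  ext i
  rw [mem_posSet]
  by_cases hiA : i ∈ A <;> by_cases hc : i ∈ B ∨ 0 < gh A B i.val <;>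
    simp [cfg, hiA, hc]

lemma cfg_posBB (A B : Finset (Fin n)) : posSet (cfg A B) false (some true) = B := by
  ext i
  rw [mem_posSet]
  by_cases hiB : i ∈ B <;> by_cases hc : i ∈ A ∨ 0 < gh A B i.val <;>
    simp [cfg, hiB, hc]

lemma topB_eq (ω : Fin n × Bool → Option Bool) : topB n ω = (posSet ω true (some true)).card := rfl
lemma topW_eq (ω : Fin n × Bool → Option Bool) : topW n ω = (posSet ω true (some false)).card := rfl
lemma neutCount_eq (ω : Fin n × Bool → Option Bool) : neutCount n ω = (posSet ω true none).card := rfl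

lemma bC_total (ω : Fin n × Bool → Option Bool) :
    bC n ω n = (posSet ω true (some true)).card + (posSet ω false (some true)).card := by
  rw [bC_eq, pfx_top _ (le_refl n), pfx_top _ (le_refl n)]

lemma wC_total (ω : Fin n × Bool → Option Bool) :
    wC n ω n = (posSet ω true (some false)).card + (posSet ω false (some false)).card := by
  rw [wC_eq, pfx_top _ (le_refl n), pfx_top _ (le_refl n)]

lemma posSet_disjoint (ω : Fin n × Bool → Option Bool) (b : Bool) {v1 v2 : Option Bool}
    (hv : v1 ≠ v2) : Disjoint (posSet ω b v1) (posSet ω b v2) := by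
  rw [Finset.disjoint_left]
  intro i h1 h2
  rw [mem_posSet] at h1 h2
  exact hv (h1 ▸ h2 ▸ rfl)

lemma bC_split (ω : Fin n × Bool → Option Bool) (j : ℕ) :
    bC n ω n = bC n ω j + (sfx (posSet ω true (some true)) j
      + sfx (posSet ω false (some true)) j) := by
  rw [bC_total, bC_eq]
  have h1 := pfx_add_sfx (posSet ω true (some true)) j
  have h2 := pfx_add_sfx (posSet ω false (some true)) j
  omega

lemma wC_split (ω : Fin n × Bool → Option Bool) (j : ℕ) :
    wC n ω n = wC n ω j + (sfx (posSet ω true (some false)) j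
      + sfx (posSet ω false (some false)) j) := by
  rw [wC_total, wC_eq]
  have h1 := pfx_add_sfx (posSet ω true (some false)) j
  have h2 := pfx_add_sfx (posSet ω false (some false)) j
  omega

/-- the forward map lands in the ballot set -/
lemma forward_dd (ω : Fin n × Bool → Option Bool) (hc : IsComplete3 n ω) :
    ∀ j ≤ n, dd (posSet ω true (some true)) (posSet ω false (some true)) j ≤ n := by
  intro j hj
  obtain ⟨h1, h2, h3, h4⟩ := hc
  have hbs := bC_split ω j
  have hws := wC_split ω j
  have hle := h3 j hj
  -- blacks in suffix ≤ whites in suffix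
  have hTs : sfx (posSet ω true (some true)) j + sfx (posSet ω true (some false)) j ≤ n - j := by
    rw [← sfx_union (posSet_disjoint ω true (by simp)) j]
    calc _ ≤ sfx (univ : Finset (Fin n)) j := sfx_mono (Finset.subset_univ _) j
    _ = n - j := sfx_univ j hj
  have hBs : sfx (posSet ω false (some true)) j + sfx (posSet ω false (some false)) j ≤ n - j := by
    rw [← sfx_union (posSet_disjoint ω false (by simp)) j]
    calc _ ≤ sfx (univ : Finset (Fin n)) j := sfx_mono (Finset.subset_univ _) j
    _ = n - j := sfx_univ j hj
  simp only [dd]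
  omega

lemma fw_height (ω : Fin n × Bool → Option Bool) (hc : IsComplete3 n ω) :
    ∀ j ≤ n, bC n ω j = wC n ω j
      + 2 * gh (posSet ω true (some true)) (posSet ω false (some true)) j := by
  set A := posSet ω true (some true) with hAdef
  set B := posSet ω false (some true) with hBdef
  intro j
  induction j with
  | zero => intro _; simp [bC_zero, wC_zero, gh]
  | succ j ih =>
    intro hj1
    have hj : j < n := by omega
    have ihj := ih (by omega)
    have hb := bC_succ ω j hj
    have hw := wC_succ ω j hj
    rcases hvt : ω (⟨j, hj⟩, true) with _ | bt
    · -- top neutral, so bottom neutral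
      have hvb : ω (⟨j, hj⟩, false) = none := ((hc.1 ⟨j, hj⟩).1 hvt)
      have hA : (⟨j, hj⟩ : Fin n) ∉ A := by rw [hAdef, mem_posSet, hvt]; simp
      have hB : (⟨j, hj⟩ : Fin n) ∉ B := by rw [hBdef, mem_posSet, hvb]; simp
      have ghs : gh A B (j + 1) = gh A B j - 1 := by
        simp only [gh, dif_pos hj, if_neg hA, if_neg hB]
      have h0 : bC n ω j = wC n ω j := hc.2.2.2 ⟨j, hj⟩ hvt
      simp only [hvt, hvb] at hb hw
      simp only [reduceCtorEq, if_false] at hb hw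
      omega
    · rcases hvb : ω (⟨j, hj⟩, false) with _ | bb
      · exact absurd ((hc.1 ⟨j, hj⟩).2 hvb) (by rw [hvt]; simp)
      · have hA : ((⟨j, hj⟩ : Fin n) ∈ A) ↔ (bt = true) := by
          rw [hAdef, mem_posSet, hvt]; simp
        have hB : ((⟨j, hj⟩ : Fin n) ∈ B) ↔ (bb = true) := by
          rw [hBdef, mem_posSet, hvb]; simp
        simp only [hvt, hvb] at hb hw
        cases bt <;> cases bb
        · -- white white
          have hA' : (⟨j, hj⟩ : Fin n) ∉ A := by rw [hA]; simp
          have hB' : (⟨j, hj⟩ : Fin n) ∉ B := by rw [hB]; simp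
          have ghs : gh A B (j + 1) = gh A B j - 1 := by
            simp only [gh, dif_pos hj, if_neg hA', if_neg hB']
          have h3 := hc.2.2.1 (j + 1) (by omega)
          simp only [reduceCtorEq, if_false, Option.some.injEq, Bool.false_eq_true,
            if_true] at hb hw
          simp at hb hw
          omega
        · -- white black
          have hA' : (⟨j, hj⟩ : Fin n) ∉ A := by rw [hA]; simp
          have hB' : (⟨j, hj⟩ : Fin n) ∈ B := by rw [hB]
          have ghs : gh A B (j + 1) = gh A B j := by
            simp only [gh, dif_pos hj, if_neg hA', if_pos hB']
          simp at hb hw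
          omega
        · -- black white
          have hA' : (⟨j, hj⟩ : Fin n) ∈ A := by rw [hA]
          have hB' : (⟨j, hj⟩ : Fin n) ∉ B := by rw [hB]; simp
          have ghs : gh A B (j + 1) = gh A B j := by
            simp only [gh, dif_pos hj, if_pos hA', if_neg hB']
          simp at hb hw
          omega
        · -- black black
          have hA' : (⟨j, hj⟩ : Fin n) ∈ A := by rw [hA]
          have hB' : (⟨j, hj⟩ : Fin n) ∈ B := by rw [hB]
          have ghs : gh A B (j + 1) = gh A B j + 1 := by
            simp only [gh, dif_pos hj, if_pos hA', if_pos hB']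
          simp at hb hw
          omega

lemma fw_cells (ω : Fin n × Bool → Option Bool) (hc : IsComplete3 n ω) :
    cfg (posSet ω true (some true)) (posSet ω false (some true)) = ω := by
  set A := posSet ω true (some true) with hAdef
  set B := posSet ω false (some true) with hBdef
  funext p
  obtain ⟨i, b⟩ := p
  have hin : i.val < n := i.isLt
  have hfh := fw_height ω hc i.val (le_of_lt hin)
  rw [← hAdef, ← hBdef] at hfh
  rcases hvt : ω (i, true) with _ | bt
  · have hvb : ω (i, false) = none := (hc.1 i).1 hvt
    have hA : i ∉ A := by rw [hAdef, mem_posSet, hvt]; simp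
    have hB : i ∉ B := by rw [hBdef, mem_posSet, hvb]; simp
    have h0 : gh A B i.val = 0 := by
      have := hc.2.2.2 i hvt
      omega
    cases b
    · rw [hvb]; exact cfg_bot_none.2 ⟨hA, hB, h0⟩
    · rw [hvt]; exact cfg_top_none.2 ⟨hA, hB, h0⟩
  · rcases hvb : ω (i, false) with _ | bb
    · exact absurd ((hc.1 i).2 hvb) (by rw [hvt]; simp)
    · have hA : (i ∈ A) ↔ (bt = true) := by rw [hAdef, mem_posSet, hvt]; simp
      have hB : (i ∈ B) ↔ (bb = true) := by rw [hBdef, mem_posSet, hvb]; simp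
      cases bt <;> cases bb
      · -- white white : need positive height
        have hA' : i ∉ A := by rw [hA]; simp
        have hB' : i ∉ B := by rw [hB]; simp
        have hpos : 0 < gh A B i.val := by
          have hb := bC_succ ω i.val hin
          have hw := wC_succ ω i.val hin
          rw [Fin.eta] at hb hw
          rw [hvt, hvb] at hb hw
          have h3 := hc.2.2.1 (i.val + 1) (by omega)
          simp at hb hw
          omega
        cases b
        · rw [hvb]
          simp only [cfg, Bool.false_eq_true, if_false, if_neg hB',
            if_pos (Or.inr hpos : i ∈ A ∨ 0 < gh A B i.val)]
        · rw [hvt]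
          simp only [cfg, if_true, if_neg hA',
            if_pos (Or.inr hpos : i ∈ B ∨ 0 < gh A B i.val)]
      · -- white black
        have hA' : i ∉ A := by rw [hA]; simp
        have hB' : i ∈ B := by rw [hB]
        cases b
        · rw [hvb]
          simp only [cfg, Bool.false_eq_true, if_false, if_pos hB']
        · rw [hvt]
          simp only [cfg, if_true, if_neg hA',
            if_pos (Or.inl hB' : i ∈ B ∨ 0 < gh A B i.val)]
      · -- black white
        have hA' : i ∈ A := by rw [hA]
        have hB' : i ∉ B := by rw [hB]; simp
        cases b
        · rw [hvb]
          simp only [cfg, Bool.false_eq_true, if_false, if_neg hB',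
            if_pos (Or.inl hA' : i ∈ A ∨ 0 < gh A B i.val)]
        · rw [hvt]
          simp only [cfg, if_true, if_pos hA']
      · -- black black
        have hA' : i ∈ A := by rw [hA]
        have hB' : i ∈ B := by rw [hB]
        cases b
        · rw [hvb]
          simp only [cfg, Bool.false_eq_true, if_false, if_pos hB']
        · rw [hvt]
          simp only [cfg, if_true, if_pos hA']

/-- pairs (top-black set, bottom-black set) satisfying the ballot condition -/
def pairGood (n k m : ℕ) : Finset (Finset (Fin n) × Finset (Fin n)) :=
  univ.filter (fun AB => AB.1.card = k ∧ AB.2.card = m ∧ ∀ j ≤ n, dd AB.1 AB.2 j ≤ n)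

lemma none_sets_eq (ω : Fin n × Bool → Option Bool)
    (hc : ∀ i : Fin n, (ω (i, true) = none ↔ ω (i, false) = none)) :
    posSet ω true none = posSet ω false none := by
  ext i
  rw [mem_posSet, mem_posSet]
  exact hc i

lemma card_configs_eq (k ℓ m : ℕ) (h : k + ℓ + m = n) :
    ((Finset.univ : Finset (Fin n × Bool → Option Bool)).filter
        (fun ω => IsComplete3 n ω ∧ neutCount n ω = ℓ ∧ topB n ω = k ∧ topW n ω = m)).card
      = (pairGood n k m).card := by
  classical
  apply Finset.card_bij'
    (i := fun ω _ => (posSet ω true (some true), posSet ω false (some true)))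
    (j := fun AB _ => cfg AB.1 AB.2)
  · -- forward membership
    intro ω hω
    rw [Finset.mem_filter] at hω
    obtain ⟨-, hcomp, hneut, htopB, htopW⟩ := hω
    rw [pairGood, Finset.mem_filter]
    refine ⟨Finset.mem_univ _, ?_, ?_, forward_dd ω hcomp⟩
    · rw [← topB_eq]; exact htopB
    · -- bottom blacks count
      show (posSet ω false (some true)).card = m
      have h1 := bC_total ω
      have h2 := wC_total ω
      have h3 := row_partition ω true
      have h4 := row_partition ω false
      have h5 : (posSet ω true none).card = (posSet ω false none).card := by
        rw [none_sets_eq ω hcomp.1]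
      have h6 := hcomp.2.1
      rw [topB_eq] at htopB
      rw [topW_eq] at htopW
      rw [neutCount_eq] at hneut
      omega
  · -- backward membership
    intro AB hAB
    rw [pairGood, Finset.mem_filter] at hAB
    obtain ⟨-, hk, hm, hP⟩ := hAB
    have hcomp := cfg_complete AB.1 AB.2 hP
    rw [Finset.mem_filter]
    refine ⟨Finset.mem_univ _, hcomp, ?_, ?_, ?_⟩
    · -- neutral count
      have h1 := bC_total (cfg AB.1 AB.2)
      have h2 := wC_total (cfg AB.1 AB.2)
      have h3 := row_partition (cfg AB.1 AB.2) true
      have h4 := row_partition (cfg AB.1 AB.2) false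
      have h5 : (posSet (cfg AB.1 AB.2) true none).card
          = (posSet (cfg AB.1 AB.2) false none).card := by
        rw [none_sets_eq _ hcomp.1]
      have h6 := hcomp.2.1
      rw [cfg_posTB, cfg_posBB, hk, hm] at h1
      rw [neutCount_eq]
      rw [cfg_posTB, hk] at h3
      rw [cfg_posBB, hm] at h4
      omega
    · rw [topB_eq, cfg_posTB]; exact hk
    · -- top whites
      have h1 := bC_total (cfg AB.1 AB.2)
      have h2 := wC_total (cfg AB.1 AB.2)
      have h3 := row_partition (cfg AB.1 AB.2) true
      have h4 := row_partition (cfg AB.1 AB.2) false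
      have h5 : (posSet (cfg AB.1 AB.2) true none).card
          = (posSet (cfg AB.1 AB.2) false none).card := by
        rw [none_sets_eq _ hcomp.1]
      have h6 := hcomp.2.1
      rw [cfg_posTB, cfg_posBB, hk, hm] at h1
      rw [topW_eq]
      rw [cfg_posTB, hk] at h3
      rw [cfg_posBB, hm] at h4
      omega
  · -- left inverse
    intro ω hω
    rw [Finset.mem_filter] at hω
    exact fw_cells ω hω.2.1
  · -- right inverse
    intro AB hAB
    exact Prod.ext (cfg_posTB AB.1 AB.2) (cfg_posBB AB.1 AB.2)

lemma pfx_union {A B : Finset (Fin n)} (hAB : Disjoint A B) (j : ℕ) :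
    pfx (A ∪ B) j = pfx A j + pfx B j := by
  rw [pfx, Finset.filter_union, Finset.card_union_of_disjoint, pfx, pfx]
  exact Finset.disjoint_filter_filter hAB

lemma pfx_compl (A : Finset (Fin n)) {j : ℕ} (hj : j ≤ n) : pfx Aᶜ j + pfx A j = j := by
  have h1 : Aᶜ ∪ A = univ := by
    ext i
    simp [Finset.mem_compl]
    tauto
  have h2 := pfx_union (disjoint_compl_left : Disjoint Aᶜ A) j
  rw [h1] at h2
  rw [← h2, pfx_univ j hj]

/-- swap the prefixes (before `j`) of `A` and `Bᶜ` -/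
def swapAt (j : ℕ) (AB : Finset (Fin n) × Finset (Fin n)) :
    Finset (Fin n) × Finset (Fin n) :=
  ((AB.2ᶜ.filter fun i => i.val < j) ∪ (AB.1.filter fun i => j ≤ i.val),
   (AB.1ᶜ.filter fun i => i.val < j) ∪ (AB.2.filter fun i => j ≤ i.val))

/-- the rightmost violation point -/
def jst (A B : Finset (Fin n)) : ℕ := Nat.findGreatest (fun j => n < dd A B j) n

def Tmap (AB : Finset (Fin n) × Finset (Fin n)) : Finset (Fin n) × Finset (Fin n) :=
  swapAt (jst AB.1 AB.2) AB

section Bad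
variable {A B : Finset (Fin n)} (hbad : ∃ j, j ≤ n ∧ n < dd A B j)

include hbad

lemma jst_spec : n < dd A B (jst A B) := by
  obtain ⟨j, hj, hdd⟩ := hbad
  exact Nat.findGreatest_spec (P := fun j => n < dd A B j) hj hdd

omit hbad in
lemma jst_le : jst A B ≤ n := Nat.findGreatest_le n

omit hbad in
lemma dd_n : dd A B n = n := by
  rw [dd, sfx_top A (le_refl n), sfx_top B (le_refl n)]
  omega

lemma jst_lt : jst A B < n := by
  rcases Nat.lt_or_ge (jst A B) n with h | h
  · exact h
  · exfalso
    have h1 := jst_spec hbad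
    have h2 : jst A B = n := le_antisymm (jst_le (A := A) (B := B)) h
    rw [h2, dd_n] at h1
    omega

lemma jst_max : ∀ j, jst A B < j → j ≤ n → dd A B j ≤ n := by
  intro j h1 h2
  by_contra hcon
  exact absurd (lt_of_not_ge hcon)
    (Nat.findGreatest_is_greatest (P := fun j => n < dd A B j) h1 h2)

lemma jst_key : dd A B (jst A B) = n + 1
    ∧ (⟨jst A B, jst_lt hbad⟩ : Fin n) ∈ A ∧ (⟨jst A B, jst_lt hbad⟩ : Fin n) ∈ B := by
  have hlt := jst_lt hbad
  have h1 := jst_spec hbad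
  have h2 := jst_max hbad (jst A B + 1) (by omega) (by omega)
  have hA := sfx_succ A (jst A B) hlt
  have hB := sfx_succ B (jst A B) hlt
  rw [dd] at h1 h2 ⊢
  constructor
  · by_cases hiA : (⟨jst A B, hlt⟩ : Fin n) ∈ A <;>
      by_cases hiB : (⟨jst A B, hlt⟩ : Fin n) ∈ B <;>
      simp [hiA, hiB] at hA hB <;> omega
  constructor
  · by_contra hiA
    rw [if_neg hiA] at hA
    by_cases hiB : (⟨jst A B, hlt⟩ : Fin n) ∈ B
    · rw [if_pos hiB] at hB; omega
    · rw [if_neg hiB] at hB; omega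
  · by_contra hiB
    rw [if_neg hiB] at hB
    by_cases hiA : (⟨jst A B, hlt⟩ : Fin n) ∈ A
    · rw [if_pos hiA] at hA; omega
    · rw [if_neg hiA] at hA; omega

omit hbad in
lemma sfx_swapfst {C D : Finset (Fin n)} {j j' : ℕ} (hj : j ≤ j') :
    sfx ((Cᶜ.filter fun i => i.val < j) ∪ (D.filter fun i => j ≤ i.val)) j' = sfx D j' := by
  unfold sfx
  congr 1
  ext i
  simp only [Finset.mem_filter, Finset.mem_union, Finset.mem_compl]
  constructor
  · rintro ⟨⟨h1, h2⟩ | ⟨h1, h2⟩, h3⟩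
    · omega
    · exact ⟨h1, h3⟩
  · rintro ⟨h1, h3⟩
    exact ⟨Or.inr ⟨h1, by omega⟩, h3⟩

omit hbad in
lemma Tmap_fst (C D : Finset (Fin n)) :
    (Tmap (C, D)).1 = (Dᶜ.filter fun i => i.val < jst C D)
      ∪ (C.filter fun i => jst C D ≤ i.val) := rfl

omit hbad in
lemma Tmap_snd (C D : Finset (Fin n)) :
    (Tmap (C, D)).2 = (Cᶜ.filter fun i => i.val < jst C D)
      ∪ (D.filter fun i => jst C D ≤ i.val) := rfl

lemma Tmap_card1 : (Tmap (A, B)).1.card + B.card = n + 1 := by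
  have hkey := jst_key hbad
  have hlt := jst_lt hbad
  set j := jst A B with hjdef
  have hdisj : Disjoint (Bᶜ.filter fun i : Fin n => i.val < j)
      (A.filter fun i => j ≤ i.val) := by
    rw [Finset.disjoint_left]
    intro a h1 h2
    rw [Finset.mem_filter] at h1 h2
    omega
  have hcard : (Tmap (A, B)).1.card = pfx Bᶜ j + sfx A j := by
    rw [Tmap_fst]
    exact Finset.card_union_of_disjoint hdisj
  have h1 := pfx_compl B (j := j) (by omega)
  have h2 := pfx_add_sfx B j
  have h3 : sfx A j + sfx B j + j = n + 1 := hkey.1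
  omega

lemma Tmap_card2 : (Tmap (A, B)).2.card + A.card = n + 1 := by
  have hkey := jst_key hbad
  have hlt := jst_lt hbad
  set j := jst A B with hjdef
  have hdisj : Disjoint (Aᶜ.filter fun i : Fin n => i.val < j)
      (B.filter fun i => j ≤ i.val) := by
    rw [Finset.disjoint_left]
    intro a h1 h2
    rw [Finset.mem_filter] at h1 h2
    omega
  have hcard : (Tmap (A, B)).2.card = pfx Aᶜ j + sfx B j := by
    rw [Tmap_snd]
    exact Finset.card_union_of_disjoint hdisj
  have h1 := pfx_compl A (j := j) (by omega)
  have h2 := pfx_add_sfx A j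
  have h3 : sfx A j + sfx B j + j = n + 1 := hkey.1
  omega

omit hbad in
lemma dd_Tmap : ∀ j', jst A B ≤ j' → dd (Tmap (A, B)).1 (Tmap (A, B)).2 j' = dd A B j' := by
  intro j' hj'
  rw [dd, dd, Tmap_fst, Tmap_snd, sfx_swapfst hj', sfx_swapfst hj']

lemma Tmap_bad : ∃ j, j ≤ n ∧ n < dd (Tmap (A, B)).1 (Tmap (A, B)).2 j := by
  refine ⟨jst A B, le_of_lt (jst_lt hbad), ?_⟩
  rw [dd_Tmap _ (le_refl _)]
  exact jst_spec hbad

lemma jst_Tmap : jst (Tmap (A, B)).1 (Tmap (A, B)).2 = jst A B := by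
  rw [jst, Nat.findGreatest_eq_iff]
  refine ⟨le_of_lt (jst_lt hbad), ?_, ?_⟩
  · intro _
    rw [dd_Tmap _ (le_refl _)]
    exact jst_spec hbad
  · intro j hj1 hj2
    rw [dd_Tmap _ (by omega)]
    have := jst_max hbad j hj1 hj2
    omega

lemma Tmap_invol : Tmap (Tmap (A, B)) = (A, B) := by
  have hj := jst_Tmap hbad
  have h1 : Tmap (Tmap (A, B)) = Tmap ((Tmap (A, B)).1, (Tmap (A, B)).2) := rfl
  rw [h1, Prod.ext_iff]
  constructor
  · rw [Tmap_fst, hj, Tmap_fst, Tmap_snd]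
    ext i
    simp only [Finset.mem_union, Finset.mem_filter, Finset.mem_compl, not_or, not_and]
    by_cases hij : i.val < jst A B <;> by_cases hiA : i ∈ A <;>
      simp [hij, hiA] <;> omega
  · rw [Tmap_snd, hj, Tmap_fst, Tmap_snd]
    ext i
    simp only [Finset.mem_union, Finset.mem_filter, Finset.mem_compl, not_or, not_and]
    by_cases hij : i.val < jst A B <;> by_cases hiB : i ∈ B <;>
      simp [hij, hiB] <;> omega

end Bad

lemma sfx_zero (A : Finset (Fin n)) : sfx A 0 = A.card := by
  have := pfx_add_sfx A 0
  rw [pfx_zero] at this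
  omega

lemma card_subsets (r : ℕ) :
    ((univ : Finset (Finset (Fin n))).filter fun A => A.card = r).card = n.choose r := by
  have h1 : ((univ : Finset (Finset (Fin n))).filter fun A => A.card = r)
      = Finset.powersetCard r univ := by
    ext A
    simp [Finset.mem_powersetCard]
  rw [h1, Finset.card_powersetCard, Finset.card_univ, Fintype.card_fin]

lemma card_pairAll (k m : ℕ) :
    ((univ : Finset (Finset (Fin n) × Finset (Fin n))).filter
      fun AB => AB.1.card = k ∧ AB.2.card = m).card = n.choose k * n.choose m := by
  rw [← Finset.univ_product_univ,
    Finset.filter_product (fun A : Finset (Fin n) => A.card = k)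
      (fun B : Finset (Fin n) => B.card = m),
    Finset.card_product, card_subsets, card_subsets]

/-- pairs violating the ballot condition -/
def pairBad (n k m : ℕ) : Finset (Finset (Fin n) × Finset (Fin n)) :=
  univ.filter (fun AB => AB.1.card = k ∧ AB.2.card = m ∧ ¬(∀ j ≤ n, dd AB.1 AB.2 j ≤ n))

lemma good_add_bad (k m : ℕ) :
    (pairGood n k m).card + (pairBad n k m).card = n.choose k * n.choose m := by
  classical
  rw [← card_pairAll k m]
  have h1 : pairGood n k m = ((univ : Finset (Finset (Fin n) × Finset (Fin n))).filter
      fun AB => AB.1.card = k ∧ AB.2.card = m).filter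
        (fun AB => ∀ j ≤ n, dd AB.1 AB.2 j ≤ n) := by
    rw [Finset.filter_filter, pairGood]
    apply Finset.filter_congr
    intro AB _
    tauto
  have h2 : pairBad n k m = ((univ : Finset (Finset (Fin n) × Finset (Fin n))).filter
      fun AB => AB.1.card = k ∧ AB.2.card = m).filter
        (fun AB => ¬∀ j ≤ n, dd AB.1 AB.2 j ≤ n) := by
    rw [Finset.filter_filter, pairBad]
    apply Finset.filter_congr
    intro AB _
    tauto
  rw [h1, h2]
  exact Finset.card_filter_add_card_filter_not _

lemma card_bad (k m : ℕ) (hkm : k + m ≤ n) :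
    (pairBad n k m).card = ((univ : Finset (Finset (Fin n) × Finset (Fin n))).filter
      fun AB => AB.1.card = n + 1 - m ∧ AB.2.card = n + 1 - k).card := by
  classical
  apply Finset.card_bij' (i := fun AB _ => Tmap AB) (j := fun AB _ => Tmap AB)
  · rintro ⟨A, B⟩ hAB
    rw [pairBad, Finset.mem_filter] at hAB
    dsimp only at hAB
    obtain ⟨-, hk, hm, hnot⟩ := hAB
    push_neg at hnot
    obtain ⟨j, hj1, hj2⟩ := hnot
    have hbad : ∃ j, j ≤ n ∧ n < dd A B j := ⟨j, hj1, hj2⟩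
    have hc1 := Tmap_card1 hbad
    have hc2 := Tmap_card2 hbad
    have hBle : B.card ≤ n := by
      calc B.card ≤ (univ : Finset (Fin n)).card := Finset.card_le_card (Finset.subset_univ _)
      _ = n := by rw [Finset.card_univ, Fintype.card_fin]
    have hAle : A.card ≤ n := by
      calc A.card ≤ (univ : Finset (Fin n)).card := Finset.card_le_card (Finset.subset_univ _)
      _ = n := by rw [Finset.card_univ, Fintype.card_fin]
    rw [Finset.mem_filter]
    exact ⟨Finset.mem_univ _, by omega, by omega⟩
  · rintro ⟨A, B⟩ hAB
    rw [Finset.mem_filter] at hAB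
    dsimp only at hAB
    obtain ⟨-, hk, hm⟩ := hAB
    have hbad : ∃ j, j ≤ n ∧ n < dd A B j := by
      refine ⟨0, by omega, ?_⟩
      rw [dd, sfx_zero, sfx_zero, hk, hm]
      omega
    have hc1 := Tmap_card1 hbad
    have hc2 := Tmap_card2 hbad
    have hTbad := Tmap_bad hbad
    rw [pairBad, Finset.mem_filter]
    refine ⟨Finset.mem_univ _, by omega, by omega, ?_⟩
    push_neg
    obtain ⟨j, hj1, hj2⟩ := hTbad
    exact ⟨j, hj1, hj2⟩
  · rintro ⟨A, B⟩ hAB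
    rw [pairBad, Finset.mem_filter] at hAB
    dsimp only at hAB
    obtain ⟨-, hk, hm, hnot⟩ := hAB
    push_neg at hnot
    obtain ⟨j, hj1, hj2⟩ := hnot
    exact Tmap_invol ⟨j, hj1, hj2⟩
  · rintro ⟨A, B⟩ hAB
    rw [Finset.mem_filter] at hAB
    dsimp only at hAB
    obtain ⟨-, hk, hm⟩ := hAB
    apply Tmap_invol
    refine ⟨0, by omega, ?_⟩
    rw [dd, sfx_zero, sfx_zero, hk, hm]
    omega

end T3aux

/-- For `k + ℓ + m = n`, the number of 3-TASEP complete configurations of length `n`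
with `ℓ` neutral columns, `k` black and `m` white particles in the top row is
`((ℓ+1)/(n+1)) * binomial (n+1) k * binomial (n+1) m`. -/
theorem stmt3 (n k ℓ m : ℕ) (h : k + ℓ + m = n) :
    ((Finset.univ : Finset (Fin n × Bool → Option Bool)).filter
        (fun ω => IsComplete3 n ω ∧ neutCount n ω = ℓ ∧ topB n ω = k ∧ topW n ω = m)).card
        * (n + 1)
      = (ℓ + 1) * (Nat.choose (n + 1) k * Nat.choose (n + 1) m) := by
  classical
  rw [T3aux.card_configs_eq k ℓ m h]
  have hkm : k + m ≤ n := by omega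
  have hgb := T3aux.good_add_bad (n := n) k m
  have hbd := T3aux.card_bad (n := n) k m hkm
  rw [T3aux.card_pairAll (n := n) (n + 1 - m) (n + 1 - k)] at hbd
  have e1 := Nat.choose_mul_succ_eq n k
  have e2 := Nat.choose_mul_succ_eq n m
  have e3 := Nat.choose_mul_succ_eq n (n + 1 - m)
  have e4 := Nat.choose_mul_succ_eq n (n + 1 - k)
  have r3 : n + 1 - (n + 1 - m) = m := by omega
  have r4 : n + 1 - (n + 1 - k) = k := by omega
  rw [r3] at e3
  rw [r4] at e4
  rw [Nat.choose_symm (show m ≤ n + 1 by omega)] at e3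
  rw [Nat.choose_symm (show k ≤ n + 1 by omega)] at e4
  have s1 : n + 1 - k = ℓ + m + 1 := by omega
  have s2 : n + 1 - m = ℓ + k + 1 := by omega
  rw [s1] at e1 e4 hbd
  rw [s2] at e2 e3 hbd
  have h' : ((k : ℤ) + ℓ + m) = (n : ℤ) := by exact_mod_cast congrArg (Nat.cast : ℕ → ℤ) h
  zify at e1 e2 e3 e4 hgb hbd ⊢
  have key : ((T3aux.pairGood n k m).card : ℤ) * ((n : ℤ) + 1) * ((n : ℤ) + 1)
      = ((ℓ : ℤ) + 1) * (((n + 1).choose k : ℤ) * ((n + 1).choose m : ℤ)) * ((n : ℤ) + 1) := by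
    linear_combination ((n : ℤ) + 1) ^ 2 * hgb
      + ((n.choose m : ℤ) * ((n : ℤ) + 1)) * e1
      + (((n + 1).choose k : ℤ) * ((ℓ : ℤ) + m + 1)) * e2
      - ((n : ℤ) + 1) ^ 2 * hbd
      - ((n.choose (ℓ + m + 1) : ℤ) * ((n : ℤ) + 1)) * e3
      - (((n + 1).choose m : ℤ) * (m : ℤ)) * e4
      + (((n + 1).choose k : ℤ) * ((n + 1).choose m : ℤ) * ((ℓ : ℤ) + 1)) * h'
  have hc := mul_right_cancel₀ (show ((n : ℤ) + 1) ≠ 0 by positivity) key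
  linarith [hc]
end

section
/- The total number of 3-TASEP complete configurations of length n (summed over all numbers ℓ of neutral columns and all particle counts) equals (1/2) * binomial(2n+2, n+1). -/
open Finset

def cnt3 (n : ℕ) (ω : Fin n × Bool → Option Bool) (j : ℕ) (v : Bool) : ℕ :=
  ∑ i : Fin n, ((if i.val < j ∧ ω (i, true) = some v then 1 else 0) +
    (if i.val < j ∧ ω (i, false) = some v then 1 else 0))

lemma bC_eq_cnt (n : ℕ) (ω : Fin n × Bool → Option Bool) (j : ℕ) :
    bC n ω j = cnt3 n ω j true := by
  rw [bC, Finset.card_filter, Fintype.sum_prod_type]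
  exact Finset.sum_congr rfl fun i _ => Fintype.sum_bool _

lemma wC_eq_cnt (n : ℕ) (ω : Fin n × Bool → Option Bool) (j : ℕ) :
    wC n ω j = cnt3 n ω j false := by
  rw [wC, Finset.card_filter, Fintype.sum_prod_type]
  exact Finset.sum_congr rfl fun i _ => Fintype.sum_bool _

def snoc3 (n : ℕ) (ω : Fin n × Bool → Option Bool) (a b : Option Bool) :
    Fin (n+1) × Bool → Option Bool :=
  fun p => if h : (p.1 : ℕ) < n then ω (⟨p.1, h⟩, p.2) else if p.2 then a else b

lemma snoc3_castSucc (n : ℕ) (ω : Fin n × Bool → Option Bool) (a b : Option Bool)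
    (i : Fin n) (r : Bool) : snoc3 n ω a b (i.castSucc, r) = ω (i, r) := by
  simp [snoc3, i.isLt]

lemma snoc3_last (n : ℕ) (ω : Fin n × Bool → Option Bool) (a b : Option Bool)
    (r : Bool) : snoc3 n ω a b (Fin.last n, r) = if r then a else b := by
  simp [snoc3]

lemma cnt3_snoc_le (n : ℕ) (ω : Fin n × Bool → Option Bool) (a b : Option Bool)
    {j : ℕ} (hj : j ≤ n) (v : Bool) :
    cnt3 (n+1) (snoc3 n ω a b) j v = cnt3 n ω j v := by
  rw [cnt3, cnt3, Fin.sum_univ_castSucc]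
  simp only [snoc3_castSucc, Fin.coe_castSucc, Fin.val_last]
  have h1 : ¬ (n < j) := by omega
  simp [h1]

lemma cnt3_snoc_top (n : ℕ) (ω : Fin n × Bool → Option Bool) (a b : Option Bool)
    (v : Bool) :
    cnt3 (n+1) (snoc3 n ω a b) (n+1) v
      = cnt3 n ω n v + ((if a = some v then 1 else 0) + (if b = some v then 1 else 0)) := by
  rw [cnt3, cnt3, Fin.sum_univ_castSucc]
  simp only [snoc3_castSucc, snoc3_last, Fin.coe_castSucc, Fin.val_last]
  congr 1
  · refine Finset.sum_congr rfl fun i _ => ?_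
    have hi : (i : ℕ) < n := i.isLt
    simp [hi, Nat.lt_succ_of_lt hi]
  · simp

lemma bC_snoc_le (n : ℕ) (ω : Fin n × Bool → Option Bool) (a b : Option Bool)
    {j : ℕ} (hj : j ≤ n) : bC (n+1) (snoc3 n ω a b) j = bC n ω j := by
  rw [bC_eq_cnt, bC_eq_cnt, cnt3_snoc_le n ω a b hj]

lemma wC_snoc_le (n : ℕ) (ω : Fin n × Bool → Option Bool) (a b : Option Bool)
    {j : ℕ} (hj : j ≤ n) : wC (n+1) (snoc3 n ω a b) j = wC n ω j := by
  rw [wC_eq_cnt, wC_eq_cnt, cnt3_snoc_le n ω a b hj]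

lemma bC_snoc_top (n : ℕ) (ω : Fin n × Bool → Option Bool) (a b : Option Bool) :
    bC (n+1) (snoc3 n ω a b) (n+1)
      = bC n ω n + ((if a = some true then 1 else 0) + (if b = some true then 1 else 0)) := by
  rw [bC_eq_cnt, bC_eq_cnt, cnt3_snoc_top]

lemma wC_snoc_top (n : ℕ) (ω : Fin n × Bool → Option Bool) (a b : Option Bool) :
    wC (n+1) (snoc3 n ω a b) (n+1)
      = wC n ω n + ((if a = some false then 1 else 0) + (if b = some false then 1 else 0)) := by
  rw [wC_eq_cnt, wC_eq_cnt, cnt3_snoc_top]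
/-- Partial configurations ending at height `k`. -/
def Pp (n k : ℕ) (ω : Fin n × Bool → Option Bool) : Prop :=
  (∀ i : Fin n, (ω (i, true) = none ↔ ω (i, false) = none)) ∧
  bC n ω n = wC n ω n + 2 * k ∧
  (∀ j ≤ n, wC n ω j ≤ bC n ω j) ∧
  (∀ i : Fin n, ω (i, true) = none → bC n ω i.val = wC n ω i.val)

instance (n k : ℕ) : DecidablePred (Pp n k) := fun ω => by
  unfold Pp; infer_instance

lemma Pp_snoc_iff (n k : ℕ) (ω : Fin n × Bool → Option Bool) (a b : Option Bool) :
    Pp (n+1) k (snoc3 n ω a b) ↔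
      (a = none ↔ b = none) ∧
      (a = none → bC n ω n = wC n ω n) ∧
      (bC n ω n + ((if a = some true then 1 else 0) + (if b = some true then 1 else 0))
        = wC n ω n + ((if a = some false then 1 else 0) + (if b = some false then 1 else 0))
          + 2 * k) ∧
      (∀ i : Fin n, (ω (i, true) = none ↔ ω (i, false) = none)) ∧
      (∀ j ≤ n, wC n ω j ≤ bC n ω j) ∧
      (∀ i : Fin n, ω (i, true) = none → bC n ω i.val = wC n ω i.val) := by
  constructor
  · rintro ⟨h1, h2, h3, h4⟩
    refine ⟨?_, ?_, ?_, ?_, ?_, ?_⟩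
    · have := h1 (Fin.last n)
      rwa [snoc3_last, snoc3_last, if_pos rfl, if_neg (by simp)] at this
    · intro ha
      have := h4 (Fin.last n) (by rw [snoc3_last, if_pos rfl]; exact ha)
      rwa [Fin.val_last, bC_snoc_le n ω a b le_rfl, wC_snoc_le n ω a b le_rfl] at this
    · rw [bC_snoc_top, wC_snoc_top] at h2; exact h2
    · intro i
      have := h1 i.castSucc
      rwa [snoc3_castSucc, snoc3_castSucc] at this
    · intro j hj
      have := h3 j (by omega)
      rwa [bC_snoc_le n ω a b hj, wC_snoc_le n ω a b hj] at this
    · intro i hi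
      have := h4 i.castSucc (by rwa [snoc3_castSucc])
      rwa [Fin.coe_castSucc, bC_snoc_le n ω a b (le_of_lt i.isLt),
        wC_snoc_le n ω a b (le_of_lt i.isLt)] at this
  · rintro ⟨g1, g2, g3, g4, g5, g6⟩
    refine ⟨?_, ?_, ?_, ?_⟩
    · intro i
      refine Fin.lastCases ?_ (fun i => ?_) i
      · rw [snoc3_last, snoc3_last, if_pos rfl, if_neg (by simp)]; exact g1
      · rw [snoc3_castSucc, snoc3_castSucc]; exact g4 i
    · rw [bC_snoc_top, wC_snoc_top]; exact g3
    · intro j hj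
      rcases (by omega : j ≤ n ∨ j = n + 1) with h | h
      · rw [bC_snoc_le n ω a b h, wC_snoc_le n ω a b h]; exact g5 j h
      · subst h
        rw [bC_snoc_top, wC_snoc_top]
        have := g5 n le_rfl
        omega
    · intro i
      refine Fin.lastCases ?_ (fun i => ?_) i
      · intro h
        rw [snoc3_last, if_pos rfl] at h
        rw [Fin.val_last, bC_snoc_le n ω a b le_rfl, wC_snoc_le n ω a b le_rfl]
        exact g2 h
      · intro h
        rw [snoc3_castSucc] at h
        rw [Fin.coe_castSucc, bC_snoc_le n ω a b (le_of_lt i.isLt),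
          wC_snoc_le n ω a b (le_of_lt i.isLt)]
        exact g6 i h

def resC (n : ℕ) (ω' : Fin (n+1) × Bool → Option Bool) : Fin n × Bool → Option Bool :=
  fun p => ω' (p.1.castSucc, p.2)

lemma snoc3_resC (n : ℕ) (ω' : Fin (n+1) × Bool → Option Bool) :
    snoc3 n (resC n ω') (ω' (Fin.last n, true)) (ω' (Fin.last n, false)) = ω' := by
  funext p
  obtain ⟨i, r⟩ := p
  by_cases h : (i : ℕ) < n
  · have hc : (⟨(i : ℕ), h⟩ : Fin n).castSucc = i := Fin.ext rfl
    simp [snoc3, h, resC, hc]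
  · have hi : i = Fin.last n := Fin.ext (by have := i.isLt; simp [Fin.last]; omega)
    subst hi
    cases r <;> simp [snoc3]

lemma resC_snoc (n : ℕ) (ω : Fin n × Bool → Option Bool) (a b : Option Bool) :
    resC n (snoc3 n ω a b) = ω := by
  funext p
  obtain ⟨i, r⟩ := p
  exact snoc3_castSucc n ω a b i r

lemma card_Pp_succ_eq_sum (n k : ℕ) :
    ((univ : Finset (Fin (n+1) × Bool → Option Bool)).filter (Pp (n+1) k)).card
      = ∑ c : Option Bool × Option Bool,
          ((univ : Finset (Fin n × Bool → Option Bool)).filter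
            (fun ω => Pp (n+1) k (snoc3 n ω c.1 c.2))).card := by
  have h1 : ((univ : Finset (Fin (n+1) × Bool → Option Bool)).filter (Pp (n+1) k)).card
      = ((univ : Finset ((Fin n × Bool → Option Bool) × (Option Bool × Option Bool))).filter
          (fun q => Pp (n+1) k (snoc3 n q.1 q.2.1 q.2.2))).card := by
    apply Finset.card_bij'
      (fun ω' _ => (resC n ω', (ω' (Fin.last n, true), ω' (Fin.last n, false))))
      (fun q _ => snoc3 n q.1 q.2.1 q.2.2)
    · intro ω' h
      simp only [Finset.mem_filter, Finset.mem_univ, true_and] at h ⊢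
      rw [snoc3_resC]
      exact h
    · intro q h
      simp only [Finset.mem_filter, Finset.mem_univ, true_and] at h ⊢
      exact h
    · intro ω' _
      exact snoc3_resC n ω'
    · intro q _
      obtain ⟨ω, a, b⟩ := q
      simp [resC_snoc, snoc3_last]
  rw [h1, Finset.card_filter, Fintype.sum_prod_type_right]
  exact Finset.sum_congr rfl fun c _ => (Finset.card_filter _ _).symm

lemma filter_card_iff {α : Type*} [Fintype α] {P Q : α → Prop}
    [DecidablePred P] [DecidablePred Q] (h : ∀ x, P x ↔ Q x) :
    (univ.filter P).card = (univ.filter Q).card := by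
  congr 1
  exact Finset.filter_congr fun x _ => h x

lemma Pp_snoc_ns (n k : ℕ) (ω : Fin n × Bool → Option Bool) (x : Bool) :
    ¬ Pp (n+1) k (snoc3 n ω none (some x)) := by
  rw [Pp_snoc_iff]
  rintro ⟨g1, -⟩
  simp at g1

lemma Pp_snoc_sn (n k : ℕ) (ω : Fin n × Bool → Option Bool) (x : Bool) :
    ¬ Pp (n+1) k (snoc3 n ω (some x) none) := by
  rw [Pp_snoc_iff]
  rintro ⟨g1, -⟩
  simp at g1

lemma Pp_snoc_nn_zero (n : ℕ) (ω : Fin n × Bool → Option Bool) :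
    Pp (n+1) 0 (snoc3 n ω none none) ↔ Pp n 0 ω := by
  rw [Pp_snoc_iff, Pp]
  constructor
  · rintro ⟨-, -, g3, g4, g5, g6⟩
    refine ⟨g4, by simp at g3; omega, g5, g6⟩
  · rintro ⟨g4, g2, g5, g6⟩
    exact ⟨Iff.rfl, fun _ => by omega, by simp; omega, g4, g5, g6⟩

lemma Pp_snoc_nn_succ (n k : ℕ) (ω : Fin n × Bool → Option Bool) :
    ¬ Pp (n+1) (k+1) (snoc3 n ω none none) := by
  rw [Pp_snoc_iff]
  rintro ⟨-, g2, g3, -⟩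
  have := g2 rfl
  simp at g3
  omega

lemma Pp_snoc_tt_zero (n : ℕ) (ω : Fin n × Bool → Option Bool) :
    ¬ Pp (n+1) 0 (snoc3 n ω (some true) (some true)) := by
  rw [Pp_snoc_iff]
  rintro ⟨-, -, g3, -, g5, -⟩
  have := g5 n le_rfl
  simp at g3
  omega

lemma Pp_snoc_tt_succ (n k : ℕ) (ω : Fin n × Bool → Option Bool) :
    Pp (n+1) (k+1) (snoc3 n ω (some true) (some true)) ↔ Pp n k ω := by
  rw [Pp_snoc_iff, Pp]
  constructor
  · rintro ⟨-, -, g3, g4, g5, g6⟩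
    refine ⟨g4, by simp at g3; omega, g5, g6⟩
  · rintro ⟨g4, g2, g5, g6⟩
    exact ⟨by simp, by simp, by simp; omega, g4, g5, g6⟩

lemma Pp_snoc_tf (n k : ℕ) (ω : Fin n × Bool → Option Bool) :
    Pp (n+1) k (snoc3 n ω (some true) (some false)) ↔ Pp n k ω := by
  rw [Pp_snoc_iff, Pp]
  constructor
  · rintro ⟨-, -, g3, g4, g5, g6⟩
    refine ⟨g4, by simp at g3; omega, g5, g6⟩
  · rintro ⟨g4, g2, g5, g6⟩
    exact ⟨by simp, by simp, by simp; omega, g4, g5, g6⟩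

lemma Pp_snoc_ft (n k : ℕ) (ω : Fin n × Bool → Option Bool) :
    Pp (n+1) k (snoc3 n ω (some false) (some true)) ↔ Pp n k ω := by
  rw [Pp_snoc_iff, Pp]
  constructor
  · rintro ⟨-, -, g3, g4, g5, g6⟩
    refine ⟨g4, by simp at g3; omega, g5, g6⟩
  · rintro ⟨g4, g2, g5, g6⟩
    exact ⟨by simp, by simp, by simp; omega, g4, g5, g6⟩

lemma Pp_snoc_ff (n k : ℕ) (ω : Fin n × Bool → Option Bool) :
    Pp (n+1) k (snoc3 n ω (some false) (some false)) ↔ Pp n (k+1) ω := by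
  rw [Pp_snoc_iff, Pp]
  constructor
  · rintro ⟨-, -, g3, g4, g5, g6⟩
    refine ⟨g4, by simp at g3; omega, g5, g6⟩
  · rintro ⟨g4, g2, g5, g6⟩
    exact ⟨by simp, by simp, by simp; omega, g4, g5, g6⟩

def f3 : ℕ → ℕ → ℕ
  | 0, 0 => 1
  | 0, _+1 => 0
  | n+1, 0 => 3 * f3 n 0 + f3 n 1
  | n+1, k+1 => f3 n k + 2 * f3 n (k+1) + f3 n (k+2)

lemma bC_zero (ω : Fin 0 × Bool → Option Bool) (j : ℕ) : bC 0 ω j = 0 := by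
  simp [bC]

lemma wC_zero (ω : Fin 0 × Bool → Option Bool) (j : ℕ) : wC 0 ω j = 0 := by
  simp [wC]

lemma card_Pp (n : ℕ) : ∀ k, ((univ : Finset (Fin n × Bool → Option Bool)).filter
    (Pp n k)).card = f3 n k := by
  induction n with
  | zero =>
    intro k
    cases k with
    | zero =>
      rw [Finset.filter_true_of_mem, Finset.card_univ]
      · rw [show f3 0 0 = 1 from rfl]
        simp [Fintype.card_fun]
      · intro ω _
        exact ⟨fun i => i.elim0, by rw [bC_zero, wC_zero], fun j _ => by rw [bC_zero, wC_zero],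
          fun i => i.elim0⟩
    | succ k =>
      rw [Finset.filter_false_of_mem, Finset.card_empty]
      · rfl
      · rintro ω - ⟨-, h2, -, -⟩
        rw [bC_zero, wC_zero] at h2
        omega
  | succ n ih =>
    intro k
    rw [card_Pp_succ_eq_sum]
    simp only [Fintype.sum_prod_type, Fintype.sum_option, Fintype.sum_bool]
    have hns : ∀ x, ((univ : Finset (Fin n × Bool → Option Bool)).filter
        (fun ω => Pp (n+1) k (snoc3 n ω none (some x)))).card = 0 := fun x => by
      rw [Finset.card_eq_zero, Finset.filter_eq_empty_iff]
      exact fun ω _ => Pp_snoc_ns n k ω x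
    have hsn : ∀ x, ((univ : Finset (Fin n × Bool → Option Bool)).filter
        (fun ω => Pp (n+1) k (snoc3 n ω (some x) none))).card = 0 := fun x => by
      rw [Finset.card_eq_zero, Finset.filter_eq_empty_iff]
      exact fun ω _ => Pp_snoc_sn n k ω x
    have htf : ((univ : Finset (Fin n × Bool → Option Bool)).filter
        (fun ω => Pp (n+1) k (snoc3 n ω (some true) (some false)))).card = f3 n k :=
      (filter_card_iff (Pp_snoc_tf n k)).trans (ih k)
    have hft : ((univ : Finset (Fin n × Bool → Option Bool)).filter
        (fun ω => Pp (n+1) k (snoc3 n ω (some false) (some true)))).card = f3 n k :=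
      (filter_card_iff (Pp_snoc_ft n k)).trans (ih k)
    rw [hns true, hns false, hsn true, hsn false, htf, hft]
    cases k with
    | zero =>
      have hff : ((univ : Finset (Fin n × Bool → Option Bool)).filter
          (fun ω => Pp (n+1) 0 (snoc3 n ω (some false) (some false)))).card = f3 n 1 :=
        (filter_card_iff (Pp_snoc_ff n 0)).trans (ih 1)
      have hnn : ((univ : Finset (Fin n × Bool → Option Bool)).filter
          (fun ω => Pp (n+1) 0 (snoc3 n ω none none))).card = f3 n 0 :=
        (filter_card_iff (Pp_snoc_nn_zero n)).trans (ih 0)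
      have htt : ((univ : Finset (Fin n × Bool → Option Bool)).filter
          (fun ω => Pp (n+1) 0 (snoc3 n ω (some true) (some true)))).card = 0 := by
        rw [Finset.card_eq_zero, Finset.filter_eq_empty_iff]
        exact fun ω _ => Pp_snoc_tt_zero n ω
      rw [hnn, htt, hff]
      show _ = 3 * f3 n 0 + f3 n 1
      omega
    | succ k =>
      have hff : ((univ : Finset (Fin n × Bool → Option Bool)).filter
          (fun ω => Pp (n+1) (k+1) (snoc3 n ω (some false) (some false)))).card = f3 n (k+2) :=
        (filter_card_iff (Pp_snoc_ff n (k+1))).trans (ih (k+2))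
      have hnn : ((univ : Finset (Fin n × Bool → Option Bool)).filter
          (fun ω => Pp (n+1) (k+1) (snoc3 n ω none none))).card = 0 := by
        rw [Finset.card_eq_zero, Finset.filter_eq_empty_iff]
        exact fun ω _ => Pp_snoc_nn_succ n k ω
      have htt : ((univ : Finset (Fin n × Bool → Option Bool)).filter
          (fun ω => Pp (n+1) (k+1) (snoc3 n ω (some true) (some true)))).card = f3 n k :=
        (filter_card_iff (Pp_snoc_tt_succ n k)).trans (ih k)
      rw [hnn, htt, hff]
      show _ = f3 n k + 2 * f3 n (k+1) + f3 n (k+2)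
      omega

lemma f3_eq (n : ℕ) : ∀ k, f3 n k = if k ≤ n then (2*n+1).choose (n - k) else 0 := by
  induction n with
  | zero =>
    intro k
    cases k with
    | zero => simp [f3]
    | succ k => simp [f3]
  | succ n ih =>
    intro k
    cases k with
    | zero =>
      rw [show f3 (n+1) 0 = 3 * f3 n 0 + f3 n 1 from rfl, ih 0, ih 1, if_pos (Nat.zero_le n),
        if_pos (Nat.zero_le (n+1)), Nat.sub_zero, Nat.sub_zero]
      cases n with
      | zero => simp
      | succ m =>
        rw [if_pos (by omega : 1 ≤ m + 1), show m+1-1 = m from rfl,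
          show 2*(m+1)+1 = 2*m+3 from by ring, show 2*(m+1+1)+1 = 2*m+5 from by ring,
          show m+1+1 = m+2 from rfl]
        have h1 : (2*m+4).choose (m+2) = (2*m+3).choose (m+1) + (2*m+3).choose (m+2) :=
          Nat.choose_succ_succ' (2*m+3) (m+1)
        have h2 : (2*m+3).choose (m+2) = (2*m+3).choose (m+1) := by
          have := Nat.choose_symm_half (m+1)
          rwa [show 2*(m+1)+1 = 2*m+3 from by ring, show m+1+1 = m+2 from rfl] at this
        have h3 : (2*m+4).choose (m+1) = (2*m+3).choose m + (2*m+3).choose (m+1) :=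
          Nat.choose_succ_succ' (2*m+3) m
        have h4 : (2*m+5).choose (m+2) = (2*m+4).choose (m+1) + (2*m+4).choose (m+2) :=
          Nat.choose_succ_succ' (2*m+4) (m+1)
        omega
    | succ k =>
      rw [show f3 (n+1) (k+1) = f3 n k + 2 * f3 n (k+1) + f3 n (k+2) from rfl, ih k, ih (k+1),
        ih (k+2)]
      rcases (by omega : n < k ∨ n = k ∨ n = k + 1 ∨ k + 2 ≤ n) with h | h | h | h
      · rw [if_neg (by omega), if_neg (by omega), if_neg (by omega), if_neg (by omega)]
      · subst h
        rw [if_pos le_rfl, if_neg (by omega), if_neg (by omega), if_pos (by omega),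
          Nat.sub_self, show n + 1 - (n + 1) = 0 from by omega, Nat.choose_zero_right,
          Nat.choose_zero_right]
      · subst h
        rw [if_pos (by omega), if_pos (by omega), if_neg (by omega), if_pos (by omega),
          show k + 1 - k = 1 from by omega, show k + 1 - (k+1) = 0 from by omega,
          show k + 1 + 1 - (k + 1) = 1 from by omega, Nat.choose_zero_right,
          Nat.choose_one_right, Nat.choose_one_right]
        omega
      · obtain ⟨d, rfl⟩ : ∃ d, n = k + 2 + d := ⟨n - (k+2), by omega⟩
        rw [if_pos (by omega), if_pos (by omega), if_pos (by omega), if_pos (by omega),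
          show k + 2 + d - k = d + 2 from by omega, show k + 2 + d - (k+1) = d + 1 from by omega,
          show k + 2 + d - (k+2) = d from by omega,
          show k + 2 + d + 1 - (k + 1) = d + 2 from by omega]
        have h1 : (2*(k+2+d)+2).choose (d+1) = (2*(k+2+d)+1).choose d + (2*(k+2+d)+1).choose (d+1) :=
          Nat.choose_succ_succ' (2*(k+2+d)+1) d
        have h2 : (2*(k+2+d)+2).choose (d+2) = (2*(k+2+d)+1).choose (d+1) + (2*(k+2+d)+1).choose (d+2) :=
          Nat.choose_succ_succ' (2*(k+2+d)+1) (d+1)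
        have h3 : (2*(k+2+d)+3).choose (d+2) = (2*(k+2+d)+2).choose (d+1) + (2*(k+2+d)+2).choose (d+2) :=
          Nat.choose_succ_succ' (2*(k+2+d)+2) (d+1)
        have e : 2*(k+2+d)+3 = 2*(k+2+d+1)+1 := by ring
        rw [e] at h3
        omega


/-- The total number of 3-TASEP complete configurations of length `n` equals
`(1/2) * binomial (2n+2) (n+1)`. -/
theorem stmt4 (n : ℕ) :
    ((Finset.univ : Finset (Fin n × Bool → Option Bool)).filter
        (fun ω => IsComplete3 n ω)).card * 2
      = Nat.choose (2 * n + 2) (n + 1) := by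
  have h0 : ((Finset.univ : Finset (Fin n × Bool → Option Bool)).filter
      (fun ω => IsComplete3 n ω)).card
      = ((Finset.univ : Finset (Fin n × Bool → Option Bool)).filter (Pp n 0)).card := by
    apply filter_card_iff
    intro ω
    unfold IsComplete3 Pp
    constructor
    · rintro ⟨h1, h2, h3, h4⟩; exact ⟨h1, by omega, h3, h4⟩
    · rintro ⟨h1, h2, h3, h4⟩; exact ⟨h1, by omega, h3, h4⟩
  rw [h0, card_Pp n 0, f3_eq n 0, if_pos (Nat.zero_le n), Nat.sub_zero]
  have h1 : (2*n+2).choose (n+1) = (2*n+1).choose n + (2*n+1).choose (n+1) :=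
    Nat.choose_succ_succ' (2*n+1) n
  have h2 : (2*n+1).choose (n+1) = (2*n+1).choose n := Nat.choose_symm_half n
  omega
end

section
/- The number of two-row circular configurations of n columns with ℓ neutral columns, k black and m white particles in the top row (k + ℓ + m = n), m black and k white particles in the bottom row, such that between consecutive neutral columns (read clockwise) each block satisfies the balance and positivity conditions, equals binomial(n, k) * binomial(n, m). -/
open Finset

/-- Cyclic shift of a column index by `r`. -/
def shiftC {n : ℕ} (c : Fin n) (r : ℕ) : Fin n :=
  ⟨(c.val + r) % n, by have := c.2; exact Nat.mod_lt _ (by omega)⟩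

/-- Number of black particles in column `d` (both rows). -/
def colBlk {n : ℕ} (τ : Fin n × Bool → Option Bool) (d : Fin n) : ℕ :=
  (if τ (d, true) = some true then 1 else 0) + (if τ (d, false) = some true then 1 else 0)

/-- Number of white particles in column `d` (both rows). -/
def colWht {n : ℕ} (τ : Fin n × Bool → Option Bool) (d : Fin n) : ℕ :=
  (if τ (d, true) = some false then 1 else 0) + (if τ (d, false) = some false then 1 else 0)

/-- Number of black particles in the `t` columns clockwise after column `c`. -/
def arcB {n : ℕ} (τ : Fin n × Bool → Option Bool) (c : Fin n) (t : ℕ) : ℕ :=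
  ∑ r ∈ Finset.range t, colBlk τ (shiftC c (r + 1))

def arcW {n : ℕ} (τ : Fin n × Bool → Option Bool) (c : Fin n) (t : ℕ) : ℕ :=
  ∑ r ∈ Finset.range t, colWht τ (shiftC c (r + 1))

/-- A circular complete configuration: neutral particles occupy full columns, and
every block between consecutive neutral columns (read clockwise) is prefix-positive
and balanced. -/
def IsCircComplete (n : ℕ) (τ : Fin n × Bool → Option Bool) : Prop :=
  (∀ i : Fin n, (τ (i, true) = none ↔ τ (i, false) = none)) ∧
  ∀ c : Fin n, τ (c, true) = none →
    ∀ t : ℕ, (∀ r < t, τ (shiftC c (r + 1), true) ≠ none) →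
      arcW τ c t ≤ arcB τ c t ∧
      (τ (shiftC c (t + 1), true) = none → arcB τ c t = arcW τ c t)

namespace Stmt6Aux


/-- Partial sums of the step function. -/
def FF (s : ℕ → ℤ) (j : ℕ) : ℤ := ∑ i ∈ Finset.range j, s i

/-- Global strict record minimum. -/
def GRec (s : ℕ → ℤ) (j : ℕ) : Prop := ∀ j' < j, FF s j < FF s j'

section Walk

variable {n ℓ : ℕ} {s : ℕ → ℤ}
variable (hn : 0 < n) (hl : 1 ≤ ℓ)
variable (hper : ∀ j, s (j + n) = s j)
variable (hval : ∀ j, s j = -2 ∨ s j = 0 ∨ s j = 2)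
variable (hsum : FF s n = -2 * (ℓ : ℤ))

lemma FF_add (a t : ℕ) : FF s (a + t) = FF s a + ∑ r ∈ Finset.range t, s (a + r) := by
  induction t with
  | zero => simp [FF]
  | succ t ih =>
      rw [← Nat.add_assoc, FF, Finset.sum_range_succ, ← FF, ih, Finset.sum_range_succ]
      ring

lemma FF_succ (j : ℕ) : FF s (j + 1) = FF s j + s j := by
  rw [FF, Finset.sum_range_succ, ← FF]

include hval in
lemma FF_even (j : ℕ) : (2 : ℤ) ∣ FF s j := by
  apply Finset.dvd_sum
  intro i _
  rcases hval i with h | h | h <;> rw [h] <;> decide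

include hper hsum in
lemma FF_period (j : ℕ) : FF s (j + n) = FF s j - 2 * (ℓ : ℤ) := by
  have : FF s (n + j) = FF s n + ∑ r ∈ Finset.range j, s (n + r) := FF_add n j
  have h2 : ∀ r, s (n + r) = s r := by
    intro r; rw [Nat.add_comm]; exact hper r
  rw [Nat.add_comm j n, this, hsum]
  simp only [h2]
  rw [← FF]; ring

include hper hsum hl in
lemma GRec_iff_add {j : ℕ} (hj : n ≤ j) : GRec s (j + n) ↔ GRec s j := by
  constructor
  · intro hg j' hj'
    have h1 := hg (j' + n) (by omega)
    rw [FF_period hper hsum, FF_period hper hsum] at h1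
    omega
  · intro hg j' hj'
    rcases lt_or_ge j' j with h | h
    · have := hg j' h
      have h2 := FF_period (s := s) hper hsum j
      omega
    · -- j ≤ j' < j + n, so j' - n < j
      obtain ⟨j'', rfl⟩ : ∃ j'', j' = j'' + n := ⟨j' - n, by omega⟩
      have h1 := hg j'' (by omega)
      rw [FF_period hper hsum, FF_period hper hsum]
      omega

include hper hsum hl in
lemma GRec_iff_add_mul {j : ℕ} (hj : n ≤ j) (q : ℕ) : GRec s (j + q * n) ↔ GRec s j := by
  induction q with
  | zero => simp
  | succ q ih =>
      have : j + (q + 1) * n = (j + q * n) + n := by ring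
      rw [this, GRec_iff_add hl hper hsum (by omega)]
      exact ih

include hper hsum hl hn in
lemma GRec_congr_mod {j j' : ℕ} (hj : n ≤ j) (hj' : n ≤ j') (hmod : j % n = j' % n) :
    GRec s j ↔ GRec s j' := by
  have e1 : j = (j % n + n) + (j / n - 1) * n := by
    have := Nat.mod_add_div j n
    have : n * (j / n) = j - j % n := by omega
    have hq : 1 ≤ j / n := Nat.one_le_div_iff hn |>.mpr hj
    have := Nat.mod_add_div j n
    nlinarith [Nat.mod_add_div j n, Nat.sub_add_cancel hq]
  have e2 : j' = (j' % n + n) + (j' / n - 1) * n := by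
    have hq : 1 ≤ j' / n := Nat.one_le_div_iff hn |>.mpr hj'
    nlinarith [Nat.mod_add_div j' n, Nat.sub_add_cancel hq]
  rw [e1, e2, GRec_iff_add_mul hl hper hsum (by omega), hmod,
    GRec_iff_add_mul hl hper hsum (by omega)]

include hper hsum hl hn in
/-- Window records (beating the previous `n` values) are global records. -/
lemma GRec_of_window {j : ℕ} (hj : n ≤ j)
    (hw : ∀ j' < j, j ≤ j' + n → FF s j < FF s j') : GRec s j := by
  have key : ∀ q, ∀ j' < j, j ≤ j' + n * (q + 1) → FF s j < FF s j' := by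
    intro q
    induction q with
    | zero => intro j' h1 h2; exact hw j' h1 (by omega)
    | succ q ih =>
        intro j' h1 h2
        by_cases hc : j ≤ j' + n * (q + 1)
        · exact ih j' h1 hc
        · have h3 : j' + n < j := by nlinarith
          have h4 := ih (j' + n) h3 (by
            have : j' + n + n * (q + 1) = j' + n * (q + 1 + 1) := by ring
            omega)
          have h5 := FF_period (s := s) hper hsum j'
          omega
  intro j' hj'
  exact key j j' hj' (by nlinarith)

include hval in
lemma noGRec_ge {J t : ℕ} (hJ : GRec s J)
    (hno : ∀ r, 1 ≤ r → r ≤ t → ¬ GRec s (J + r)) :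
    ∀ r ≤ t, FF s J ≤ FF s (J + r) := by
  intro r
  induction r using Nat.strong_induction_on with
  | _ r ih =>
      intro hr
      by_contra hlt
      push_neg at hlt
      have hr1 : 1 ≤ r := by
        rcases Nat.eq_zero_or_pos r with h | h
        · subst h; simp at hlt
        · exact h
      apply hno r hr1 hr
      intro j' hj'
      rcases lt_trichotomy j' J with h | h | h
      · exact lt_trans hlt (hJ j' h)
      · subst h; exact hlt
      · obtain ⟨r', hr', rfl⟩ : ∃ r', r' < r ∧ j' = J + r' := ⟨j' - J, by omega, by omega⟩
        have := ih r' hr' (by omega)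
        omega

include hval in
lemma step_ge (j : ℕ) : FF s j - 2 ≤ FF s (j + 1) := by
  have := FF_succ (s := s) j
  rcases hval j with h | h | h <;> omega

include hval in
lemma eq_at_next {J t : ℕ} (hJ : GRec s J)
    (hno : ∀ r, 1 ≤ r → r ≤ t → ¬ GRec s (J + r))
    (hnext : GRec s (J + t + 1)) : FF s (J + t) = FF s J := by
  have h1 : FF s J ≤ FF s (J + t) := noGRec_ge hval hJ hno t le_rfl
  have h2 : FF s (J + t + 1) < FF s J := hnext J (by omega)
  have h3 := step_ge (s := s) hval (J + t)
  have e1 := FF_even (s := s) hval J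
  have e2 := FF_even (s := s) hval (J + t + 1)
  omega

include hval in
lemma GRec_step {j : ℕ} (hg : GRec s (j + 1)) : s j = -2 := by
  have h1 : FF s (j + 1) < FF s j := hg j (by omega)
  have h2 := FF_succ (s := s) j
  rcases hval j with h | h | h <;> omega


open scoped Classical in
include hn hl hper hval hsum in
theorem card_GRec :
    ((Finset.Icc (n + 1) (2 * n)).filter (GRec s)).card = ℓ := by
  have hFp : ∀ j : ℕ, FF s (j + n) = FF s j - 2 * (ℓ : ℤ) := fun j => FF_period hper hsum j
  have hFe : ∀ j : ℕ, (2:ℤ) ∣ FF s j := fun j => FF_even hval j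
  have hstep : ∀ j : ℕ, FF s j - 2 ≤ FF s (j + 1) := fun j => step_ge hval j
  -- minimum of FF over [1, n]
  obtain ⟨j₁, hj₁mem, hj₁min⟩ :=
    Finset.exists_min_image (Finset.Icc 1 n) (FF s) ⟨n, by simp [Finset.mem_Icc]; omega⟩
  simp only [Finset.mem_Icc] at hj₁mem
  set m₁ := FF s j₁ with hm₁
  have hm₁n : m₁ ≤ -2 * (ℓ : ℤ) := by
    have := hj₁min n (by simp [Finset.mem_Icc]; omega); rw [← hsum]; exact this
  have hm₁neg : m₁ < 0 := by
    have h1 : (1:ℤ) ≤ (ℓ:ℤ) := by exact_mod_cast hl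
    linarith
  have hm₁even : (2:ℤ) ∣ m₁ := hFe j₁
  have hF0 : FF s 0 = 0 := by simp [FF]
  -- lower bound for FF on [0, n]
  have hlow : ∀ j ≤ n, m₁ ≤ FF s j := by
    intro j hj
    rcases Nat.eq_zero_or_pos j with rfl | hj0
    · omega
    · exact hj₁min j (by simp [Finset.mem_Icc]; omega)
  -- the target value set
  have key := Finset.card_bij (fun (j : ℕ) (_ : j ∈ (Finset.Icc (n + 1) (2 * n)).filter (GRec s))
      => FF s j)
    (t := (Finset.range ℓ).image (fun i : ℕ => m₁ - 2 - 2 * (i : ℤ)))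
    ?_ ?_ ?_
  · rw [key, Finset.card_image_of_injective _ (by intro a b hab; simp at hab; omega),
      Finset.card_range]
  · -- maps into target
    intro j hj
    simp only [Finset.mem_filter, Finset.mem_Icc] at hj
    obtain ⟨⟨hj1, hj2⟩, hg⟩ := hj
    have hup : FF s j < m₁ := hg j₁ (by omega)
    have hdown : m₁ - 2 * (ℓ:ℤ) ≤ FF s j := by
      obtain ⟨j', rfl⟩ : ∃ j', j = j' + n := ⟨j - n, by omega⟩
      have := hlow j' (by omega)
      rw [hFp]; omega
    have hev : (2:ℤ) ∣ FF s j := hFe j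
    simp only [Finset.mem_image, Finset.mem_range]
    exact ⟨(m₁ - 2 - FF s j).toNat / 2, by omega, by omega⟩
  · -- injective
    intro a ha b hb hab
    have hab : FF s a = FF s b := hab
    simp only [Finset.mem_filter, Finset.mem_Icc] at ha hb
    rcases lt_trichotomy a b with h | h | h
    · have := hb.2 a h; omega
    · exact h
    · have := ha.2 b h; omega
  · -- surjective
    intro v hv
    simp only [Finset.mem_image, Finset.mem_range] at hv
    obtain ⟨i, hi, rfl⟩ := hv
    set v := m₁ - 2 - 2 * (i:ℤ) with hv
    have hvlt : v < m₁ := by omega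
    have hvge : m₁ - 2 * (ℓ:ℤ) ≤ v := by
      have : (i:ℤ) + 1 ≤ (ℓ:ℤ) := by exact_mod_cast hi
      omega
    have hvev : (2:ℤ) ∣ v := by omega
    -- Nat.find for first index with FF ≤ v
    have hex : ∃ j, FF s j ≤ v := ⟨j₁ + n, by rw [hFp]; omega⟩
    classical
    set j := Nat.find hex with hjdef
    have hjle : FF s j ≤ v := Nat.find_spec hex
    have hjmin : ∀ j' < j, v < FF s j' := by
      intro j' hj'
      have := Nat.find_min hex hj'
      omega
    have hjpos : 0 < j := by
      rcases Nat.eq_zero_or_pos j with h | h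
      · exfalso; rw [h] at hjle; rw [hF0] at hjle; omega
      · exact h
    have hjeq : FF s j = v := by
      have h1 : v < FF s (j - 1) := hjmin (j - 1) (by omega)
      have h2 := hstep (j - 1)
      have h3 : j - 1 + 1 = j := by omega
      rw [h3] at h2
      have := hFe (j - 1)
      have := hFe j
      omega
    refine ⟨j, ?_, hjeq⟩
    simp only [Finset.mem_filter, Finset.mem_Icc]
    refine ⟨⟨?_, ?_⟩, ?_⟩
    · -- j ≥ n + 1
      by_contra hcon
      push_neg at hcon
      have := hlow j (by omega)
      omega
    · exact le_trans (Nat.find_le (show FF s (j₁ + n) ≤ v by rw [hFp]; omega)) (by omega)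
    · intro j' hj'
      rw [hjeq]; exact hjmin j' hj'

end Walk
/-! ### shiftC arithmetic -/

lemma shiftC_zero {n : ℕ} (c : Fin n) : shiftC c 0 = c := by
  apply Fin.ext; simp [shiftC, Nat.mod_eq_of_lt c.2]

lemma shiftC_n {n : ℕ} (c : Fin n) : shiftC c n = c := by
  apply Fin.ext
  show (c.val + n) % n = c.val
  rw [Nat.add_mod_right, Nat.mod_eq_of_lt c.2]

lemma shiftC_add {n : ℕ} (c : Fin n) (a b : ℕ) :
    shiftC (shiftC c a) b = shiftC c (a + b) := by
  apply Fin.ext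
  show ((c.val + a) % n + b) % n = (c.val + (a + b)) % n
  rw [Nat.mod_add_mod, Nat.add_assoc]

lemma shiftC_inj {n : ℕ} (c : Fin n) {x y : ℕ} (hx : x < n) (hy : y < n)
    (hxy : shiftC c (x + 1) = shiftC c (y + 1)) : x = y := by
  have h : (c.val + (x + 1)) % n = (c.val + (y + 1)) % n := congrArg Fin.val hxy
  have h2 : (x + 1) % n = (y + 1) % n := Nat.ModEq.add_left_cancel' c.val h
  by_cases hx1 : x + 1 = n
  · by_cases hy1 : y + 1 = n
    · omega
    · rw [hx1, Nat.mod_self, Nat.mod_eq_of_lt (by omega)] at h2; omega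
  · by_cases hy1 : y + 1 = n
    · rw [hy1, Nat.mod_self, Nat.mod_eq_of_lt (by omega)] at h2; omega
    · rw [Nat.mod_eq_of_lt (by omega), Nat.mod_eq_of_lt (by omega)] at h2; omega

lemma shiftC_ne_self {n : ℕ} (c : Fin n) {r : ℕ} (hr : 0 < r) (hrn : r < n) :
    shiftC c r ≠ c := by
  intro hcon
  have h : (c.val + r) % n = c.val := congrArg Fin.val hcon
  conv_rhs at h => rw [← Nat.mod_eq_of_lt c.2]
  have h2 : r % n = 0 % n := Nat.ModEq.add_left_cancel' c.val (by
    show (c.val + r) % n = (c.val + 0) % n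
    simpa using h)
  rw [Nat.mod_eq_of_lt hrn, Nat.zero_mod] at h2
  omega

lemma sum_shift_univ {n : ℕ} {M : Type*} [AddCommMonoid M] (hn : 0 < n) (c : Fin n)
    (f : Fin n → M) : ∑ r ∈ Finset.range n, f (shiftC c (r + 1)) = ∑ d, f d := by
  rw [← Fin.sum_univ_eq_sum_range (fun r => f (shiftC c (r + 1))) n]
  have hbij : Function.Bijective (fun i : Fin n => shiftC c (i.val + 1)) := by
    rw [← Finite.injective_iff_bijective]
    intro a b hab
    exact Fin.ext (shiftC_inj c a.2 b.2 hab)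
  exact Fintype.sum_bijective _ hbij _ _ (fun i => rfl)

lemma arcSum_add {n : ℕ} {M : Type*} [AddCommMonoid M] (f : Fin n → M) (c : Fin n) (a b : ℕ) :
    ∑ r ∈ Finset.range (a + b), f (shiftC c (r + 1)) =
      ∑ r ∈ Finset.range a, f (shiftC c (r + 1))
      + ∑ r ∈ Finset.range b, f (shiftC (shiftC c a) (r + 1)) := by
  induction b with
  | zero => simp
  | succ b ih =>
      have h1 : a + (b + 1) = (a + b) + 1 := by omega
      rw [h1, Finset.sum_range_succ, ih, Finset.sum_range_succ, shiftC_add]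
      rw [h1, add_assoc]

lemma arcB_add {n : ℕ} (τ : Fin n × Bool → Option Bool) (c : Fin n) (a b : ℕ) :
    arcB τ c (a + b) = arcB τ c a + arcB τ (shiftC c a) b := arcSum_add _ c a b

lemma arcW_add {n : ℕ} (τ : Fin n × Bool → Option Bool) (c : Fin n) (a b : ℕ) :
    arcW τ c (a + b) = arcW τ c a + arcW τ (shiftC c a) b := arcSum_add _ c a b

lemma col_neutral {n : ℕ} (τ : Fin n × Bool → Option Bool)
    (hiff : ∀ i : Fin n, τ (i, true) = none ↔ τ (i, false) = none) (d : Fin n)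
    (hd : τ (d, true) = none) : colBlk τ d = 0 ∧ colWht τ d = 0 := by
  have h2 : τ (d, false) = none := (hiff d).1 hd
  simp [colBlk, colWht, hd, h2]

/-! ### the step function of a pair of subsets -/

def idx {n : ℕ} (hn : 0 < n) (j : ℕ) : Fin n := ⟨j % n, Nat.mod_lt _ hn⟩

def stepOf {n : ℕ} (hn : 0 < n) (A B : Finset (Fin n)) (j : ℕ) : ℤ :=
  (if idx hn j ∈ A then 2 else 0) + (if idx hn j ∈ B then 2 else 0) - 2

lemma idx_lt {n : ℕ} (hn : 0 < n) {j : ℕ} (hj : j < n) : idx hn j = ⟨j, hj⟩ := by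
  apply Fin.ext; simp [idx, Nat.mod_eq_of_lt hj]

lemma stepOf_per {n : ℕ} (hn : 0 < n) (A B : Finset (Fin n)) (j : ℕ) :
    stepOf hn A B (j + n) = stepOf hn A B j := by
  have : idx hn (j + n) = idx hn j := by
    apply Fin.ext; simp [idx, Nat.add_mod_right]
  simp [stepOf, this]

lemma stepOf_val {n : ℕ} (hn : 0 < n) (A B : Finset (Fin n)) (j : ℕ) :
    stepOf hn A B j = -2 ∨ stepOf hn A B j = 0 ∨ stepOf hn A B j = 2 := by
  unfold stepOf
  by_cases h1 : idx hn j ∈ A <;> by_cases h2 : idx hn j ∈ B <;> simp [h1, h2]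

lemma stepOf_neg {n : ℕ} (hn : 0 < n) (A B : Finset (Fin n)) (j : ℕ)
    (h : stepOf hn A B j = -2) : idx hn j ∉ A ∧ idx hn j ∉ B := by
  unfold stepOf at h
  by_cases h1 : idx hn j ∈ A <;> by_cases h2 : idx hn j ∈ B <;>
    simp [h1, h2] at h ⊢

lemma stepOf_sum {n : ℕ} (hn : 0 < n) (A B : Finset (Fin n)) :
    FF (stepOf hn A B) n = 2 * (A.card : ℤ) + 2 * (B.card : ℤ) - 2 * (n : ℤ) := by
  have h1 : FF (stepOf hn A B) n = ∑ i : Fin n, stepOf hn A B i.val :=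
    (Fin.sum_univ_eq_sum_range (fun j => stepOf hn A B j) n).symm
  rw [h1]
  have h2 : ∀ i : Fin n, stepOf hn A B i.val =
      (if i ∈ A then (2:ℤ) else 0) + (if i ∈ B then (2:ℤ) else 0) - 2 := by
    intro i
    have : idx hn i.val = i := by rw [idx_lt hn i.2]
    simp [stepOf, this]
  rw [Finset.sum_congr rfl (fun i _ => h2 i)]
  rw [Finset.sum_sub_distrib, Finset.sum_add_distrib, Finset.sum_ite_mem,
    Finset.sum_ite_mem, Finset.univ_inter, Finset.univ_inter,
    Finset.sum_const, Finset.sum_const, Finset.sum_const, Finset.card_univ,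
    Fintype.card_fin]
  push_cast
  ring

/-! ### bridge between configurations and step functions -/

def AOf {n : ℕ} (τ : Fin n × Bool → Option Bool) : Finset (Fin n) :=
  Finset.univ.filter (fun i => τ (i, true) = some true)

def BOf {n : ℕ} (τ : Fin n × Bool → Option Bool) : Finset (Fin n) :=
  Finset.univ.filter (fun i => τ (i, false) = some true)

lemma step_col {n : ℕ} (hn : 0 < n) (τ : Fin n × Bool → Option Bool)
    (hiff : ∀ i : Fin n, τ (i, true) = none ↔ τ (i, false) = none) (j : ℕ) :
    stepOf hn (AOf τ) (BOf τ) j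
      = ((colBlk τ (idx hn j) : ℤ) - (colWht τ (idx hn j) : ℤ))
        - 2 * (if τ (idx hn j, true) = none then 1 else 0) := by
  set d := idx hn j with hd
  rcases h1 : τ (d, true) with _ | b
  · have h2 : τ (d, false) = none := (hiff d).1 h1
    simp [stepOf, AOf, BOf, colBlk, colWht, ← hd, h1, h2]
  · rcases h2 : τ (d, false) with _ | b'
    · exact absurd ((hiff d).2 h2) (by simp [h1])
    · cases b <;> cases b' <;>
        simp [stepOf, AOf, BOf, colBlk, colWht, ← hd, h1, h2] <;> ring

lemma idx_shift {n : ℕ} (hn : 0 < n) (c : Fin n) (r : ℕ) :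
    idx hn (c.val + 1 + r) = shiftC c (r + 1) := by
  apply Fin.ext
  show (c.val + 1 + r) % n = (c.val + (r + 1)) % n
  congr 1
  omega

lemma arc_diff {n : ℕ} (hn : 0 < n) (τ : Fin n × Bool → Option Bool)
    (hiff : ∀ i : Fin n, τ (i, true) = none ↔ τ (i, false) = none) (c : Fin n) (t : ℕ) :
    FF (stepOf hn (AOf τ) (BOf τ)) (c.val + 1 + t)
      = FF (stepOf hn (AOf τ) (BOf τ)) (c.val + 1)
        + ((arcB τ c t : ℤ) - (arcW τ c t : ℤ))
        - 2 * (((Finset.range t).filter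
            (fun r => τ (shiftC c (r + 1), true) = none)).card : ℤ) := by
  rw [FF_add]
  have hcongr : ∀ r ∈ Finset.range t, stepOf hn (AOf τ) (BOf τ) (c.val + 1 + r)
      = ((colBlk τ (shiftC c (r + 1)) : ℤ) - (colWht τ (shiftC c (r + 1)) : ℤ))
        - 2 * (if τ (shiftC c (r + 1), true) = none then (1:ℤ) else 0) := by
    intro r _
    rw [step_col hn τ hiff, idx_shift]
  rw [Finset.sum_congr rfl hcongr]
  rw [Finset.sum_sub_distrib, Finset.sum_sub_distrib, ← Finset.mul_sum, Finset.sum_boole]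
  have hB : ((arcB τ c t : ℤ)) = ∑ r ∈ Finset.range t, (colBlk τ (shiftC c (r + 1)) : ℤ) := by
    unfold arcB; push_cast; rfl
  have hW : ((arcW τ c t : ℤ)) = ∑ r ∈ Finset.range t, (colWht τ (shiftC c (r + 1)) : ℤ) := by
    unfold arcW; push_cast; rfl
  rw [hB, hW]
  ring


lemma arcs_ok {n : ℕ} (τ : Fin n × Bool → Option Bool) (hτ : IsCircComplete n τ)
    (c : Fin n) (hc : τ (c, true) = none) :
    ∀ t, arcW τ c t ≤ arcB τ c t ∧ (τ (shiftC c t, true) = none → arcB τ c t = arcW τ c t) := by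
  obtain ⟨hiff, harc⟩ := hτ
  intro t
  induction t using Nat.strong_induction_on with
  | _ t ih =>
  rcases Nat.eq_zero_or_pos t with rfl | ht
  · exact ⟨le_refl _, fun _ => rfl⟩
  · classical
    set U := (Finset.range t).filter (fun u => τ (shiftC c u, true) = none) with hU
    have h0U : (0 : ℕ) ∈ U := by
      simp only [hU, Finset.mem_filter, Finset.mem_range]
      exact ⟨ht, by rw [shiftC_zero]; exact hc⟩
    have hUne : U.Nonempty := ⟨0, h0U⟩
    set u := U.max' hUne with hu
    have huU : u ∈ U := U.max'_mem hUne
    have hut : u < t := by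
      have := (Finset.mem_filter.mp huU).1; simpa using this
    have huneut : τ (shiftC c u, true) = none := (Finset.mem_filter.mp huU).2
    have hmax : ∀ v, u < v → v < t → τ (shiftC c v, true) ≠ none := by
      intro v huv hvt hnone
      have hvU : v ∈ U := by
        simp only [hU, Finset.mem_filter, Finset.mem_range]; exact ⟨hvt, hnone⟩
      have := U.le_max' v hvU
      omega
    have ihu := ih u hut
    have hequ : arcB τ c u = arcW τ c u := ihu.2 huneut
    have haddB : arcB τ c t = arcB τ c u + arcB τ (shiftC c u) (t - u) := by
      have h1 : t = u + (t - u) := by omega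
      conv_lhs => rw [h1]
      exact arcB_add τ c u (t - u)
    have haddW : arcW τ c t = arcW τ c u + arcW τ (shiftC c u) (t - u) := by
      have h1 : t = u + (t - u) := by omega
      conv_lhs => rw [h1]
      exact arcW_add τ c u (t - u)
    by_cases hlast : τ (shiftC c t, true) = none
    · -- last column of the range is neutral: the arc `u..t-1` is balanced
      have harc2 := harc (shiftC c u) huneut (t - u - 1) (by
        intro r hr
        rw [shiftC_add]
        exact hmax (u + (r + 1)) (by omega) (by omega))
      have hnext : τ (shiftC (shiftC c u) ((t - u - 1) + 1), true) = none := by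
        rw [shiftC_add]
        have : u + (t - u - 1 + 1) = t := by omega
        rw [this]; exact hlast
      have hbal := harc2.2 hnext
      have hstep : arcB τ (shiftC c u) (t - u) = arcW τ (shiftC c u) (t - u) := by
        have h1 : t - u = (t - u - 1) + 1 := by omega
        have hcol := col_neutral τ hiff _ hnext
        rw [h1]
        show (∑ r ∈ Finset.range (t - u - 1 + 1), colBlk τ (shiftC (shiftC c u) (r + 1)))
          = ∑ r ∈ Finset.range (t - u - 1 + 1), colWht τ (shiftC (shiftC c u) (r + 1))
        rw [Finset.sum_range_succ, Finset.sum_range_succ, hcol.1, hcol.2]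
        exact congrArg (· + 0) hbal
      have heq : arcB τ c t = arcW τ c t := by
        rw [haddB, haddW, hequ, hstep]
      exact ⟨le_of_eq heq.symm, fun _ => heq⟩
    · -- last column not neutral
      have harc2 := harc (shiftC c u) huneut (t - u) (by
        intro r hr
        rw [shiftC_add]
        rcases Nat.lt_or_ge (u + (r + 1)) t with h | h
        · exact hmax (u + (r + 1)) (by omega) h
        · have : u + (r + 1) = t := by omega
          rw [this]; exact hlast)
      have hineq := harc2.1
      constructor
      · rw [haddB, haddW, hequ]
        omega
      · intro hcon; exact absurd hcon hlast


/-! ### sums of periodic functions over a period -/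

section Periodic
variable {n ℓ : ℕ} {s : ℕ → ℤ}
variable (hn : 0 < n) (hl : 1 ≤ ℓ)
variable (hper : ∀ j, s (j + n) = s j)

include hper in
lemma period_sum (a : ℕ) : ∑ r ∈ Finset.range n, s (a + r) = FF s n := by
  induction a with
  | zero => simp [FF]
  | succ a ih =>
      have h1 : ∑ r ∈ Finset.range (n + 1), s (a + r)
          = ∑ r ∈ Finset.range n, s (a + (r + 1)) + s (a + 0) := Finset.sum_range_succ' _ n
      have h2 : ∑ r ∈ Finset.range (n + 1), s (a + r)
          = ∑ r ∈ Finset.range n, s (a + r) + s (a + n) := Finset.sum_range_succ _ n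
      have h3 : ∀ r, s (a + (r + 1)) = s (a + 1 + r) := by
        intro r; congr 1; omega
      have h4 : s (a + n) = s (a + 0) := by rw [Nat.add_zero, hper]
      rw [Finset.sum_congr rfl (fun r _ => h3 r)] at h1
      rw [h4] at h2
      rw [← ih]
      omega

end Periodic

/-! ### key facts about a circular complete configuration -/

section Tau
variable {n ℓ : ℕ}

lemma topB_eq_AOf (τ : Fin n × Bool → Option Bool) : topB n τ = (AOf τ).card := rfl

lemma nu_full (hn : 0 < n) (τ : Fin n × Bool → Option Bool) (c : Fin n) :
    ((Finset.range n).filter (fun r => τ (shiftC c (r + 1), true) = none)).card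
      = neutCount n τ := by
  rw [Finset.card_filter, neutCount, Finset.card_filter]
  exact sum_shift_univ hn c (fun d => if τ (d, true) = none then 1 else 0)

lemma nu_lt (τ : Fin n × Bool → Option Bool) {c : Fin n} (hc : τ (c, true) = none)
    (hcount : neutCount n τ = ℓ) {t : ℕ} (ht : t + 1 ≤ n) :
    ((Finset.range t).filter (fun r => τ (shiftC c (r + 1), true) = none)).card + 1 ≤ ℓ := by
  have hcount' : (((Finset.univ : Finset (Fin n)).filter
      (fun i => τ (i, true) = none)).card) = ℓ := hcount
  have hcN : c ∈ (Finset.univ : Finset (Fin n)).filter (fun i => τ (i, true) = none) := by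
    simp [hc]
  have hsub : ((Finset.range t).filter (fun r => τ (shiftC c (r + 1), true) = none)).card
      ≤ (((Finset.univ : Finset (Fin n)).filter (fun i => τ (i, true) = none)).erase c).card := by
    apply Finset.card_le_card_of_injOn (fun r => shiftC c (r + 1))
    · intro r hr
      simp only [Finset.mem_coe, Finset.mem_filter, Finset.mem_range] at hr
      rw [Finset.mem_coe, Finset.mem_erase]
      exact ⟨shiftC_ne_self c (by omega) (by omega), by simp [hr.2]⟩
    · intro x hx y hy hxy
      simp only [Finset.coe_filter, Set.mem_setOf_eq, Finset.mem_range] at hx hy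
      exact shiftC_inj c (by omega) (by omega) hxy
  rw [Finset.card_erase_of_mem hcN, hcount'] at hsub
  have hpos : 1 ≤ ℓ := by
    rw [← hcount']
    exact Finset.card_pos.mpr ⟨c, hcN⟩
  omega

/-- The total step sum over one period for a circular complete configuration. -/
lemma sum_of_tau (hn : 0 < n) (hl : 1 ≤ ℓ) (τ : Fin n × Bool → Option Bool)
    (hτ : IsCircComplete n τ) (hcount : neutCount n τ = ℓ) :
    FF (stepOf hn (AOf τ) (BOf τ)) n = -2 * (ℓ : ℤ) := by
  obtain ⟨c, hc⟩ : ∃ c : Fin n, τ (c, true) = none := by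
    have : 0 < neutCount n τ := by omega
    rw [neutCount] at this
    obtain ⟨c, hcmem⟩ := Finset.card_pos.mp this
    exact ⟨c, (Finset.mem_filter.mp hcmem).2⟩
  have hiff := hτ.1
  have hbal : arcB τ c n = arcW τ c n :=
    (arcs_ok τ hτ c hc n).2 (by rw [shiftC_n]; exact hc)
  have hdiff := arc_diff hn τ hiff c n
  have hFF : FF (stepOf hn (AOf τ) (BOf τ)) (c.val + 1 + n)
      = FF (stepOf hn (AOf τ) (BOf τ)) (c.val + 1) + FF (stepOf hn (AOf τ) (BOf τ)) n := by
    rw [FF_add, period_sum (stepOf_per hn (AOf τ) (BOf τ))]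
  rw [hFF, nu_full hn τ c, hcount] at hdiff
  omega

open scoped Classical in
/-- Every neutral column of a circular complete configuration is a record position. -/
lemma neutral_GRec (hn : 0 < n) (hl : 1 ≤ ℓ) (τ : Fin n × Bool → Option Bool)
    (hτ : IsCircComplete n τ) (hcount : neutCount n τ = ℓ) (c : Fin n)
    (hc : τ (c, true) = none) :
    GRec (stepOf hn (AOf τ) (BOf τ)) (c.val + n + 1) := by
  have hiff := hτ.1
  have hper := stepOf_per hn (AOf τ) (BOf τ)
  have hval := stepOf_val hn (AOf τ) (BOf τ)
  have hsum := sum_of_tau hn hl τ hτ hcount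
  apply GRec_of_window hn hl hper hsum (by omega)
  intro j' h1 h2
  obtain ⟨t, htn, rfl⟩ : ∃ t, t + 1 ≤ n ∧ j' = c.val + 1 + t :=
    ⟨j' - (c.val + 1), by omega, by omega⟩
  have hc1 : c.val + n + 1 = c.val + 1 + n := by omega
  rw [hc1, arc_diff hn τ hiff c n, arc_diff hn τ hiff c t]
  have hbal : arcB τ c n = arcW τ c n :=
    (arcs_ok τ hτ c hc n).2 (by rw [shiftC_n]; exact hc)
  have hineq : arcW τ c t ≤ arcB τ c t := (arcs_ok τ hτ c hc t).1
  have hν := nu_lt τ hc hcount htn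
  have hνfull : ((Finset.range n).filter (fun r => τ (shiftC c (r + 1), true) = none)).card
      = ℓ := by rw [nu_full hn τ c, hcount]
  rw [hbal, hνfull]
  have h3 : (1 : ℤ) ≤ (ℓ : ℤ) := by exact_mod_cast hl
  push_cast
  omega

end Tau

/-! ### counting record positions -/

section NP
variable {n ℓ : ℕ} {s : ℕ → ℤ}
variable (hn : 0 < n) (hl : 1 ≤ ℓ)
variable (hper : ∀ j, s (j + n) = s j)
variable (hval : ∀ j, s j = -2 ∨ s j = 0 ∨ s j = 2)
variable (hsum : FF s n = -2 * (ℓ : ℤ))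

open scoped Classical in
include hn hl hper hval hsum in
lemma card_NP :
    ((Finset.univ : Finset (Fin n)).filter (fun c : Fin n => GRec s (c.val + n + 1))).card
      = ℓ := by
  rw [← card_GRec hn hl hper hval hsum]
  apply Finset.card_nbij (fun c : Fin n => c.val + n + 1)
  · intro c hcmem
    simp only [Finset.mem_coe, Finset.mem_filter, Finset.mem_univ, true_and] at hcmem
    simp only [Finset.mem_coe, Finset.mem_filter, Finset.mem_Icc]
    have := c.2
    exact ⟨⟨by omega, by omega⟩, hcmem⟩
  · intro x _ y _ hxy
    simp only at hxy
    exact Fin.ext (by omega)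
  · intro j hj
    simp only [Finset.coe_filter, Set.mem_setOf_eq, Finset.mem_Icc] at hj
    refine ⟨⟨j - n - 1, by omega⟩, ?_, by simp; omega⟩
    simp only [Set.mem_setOf_eq, Finset.mem_coe, Finset.mem_filter, Finset.mem_univ, true_and]
    have hjj : (j - n - 1) + n + 1 = j := by omega
    rw [hjj]
    exact hj.2

open scoped Classical in
include hper hsum hl hn in
lemma GRec_shift_iff (c : Fin n) (r : ℕ) :
    GRec s ((shiftC c (r + 1)).val + n + 1) ↔ GRec s (c.val + n + 1 + (r + 1)) := by
  apply GRec_congr_mod hn hl hper hsum (by omega) (by omega)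
  show ((c.val + (r + 1)) % n + n + 1) % n = (c.val + n + 1 + (r + 1)) % n
  rw [Nat.add_assoc, Nat.mod_add_mod]
  congr 1
  omega

end NP


/-! ### the inverse construction -/

section Psi
variable {n ℓ : ℕ}

open scoped Classical in
noncomputable def Psi (hn : 0 < n) (A B : Finset (Fin n)) : Fin n × Bool → Option Bool :=
  fun p =>
    if (p.2 = true ∧ p.1 ∈ A) ∨ (p.2 = false ∧ p.1 ∈ B) then some true
    else if GRec (stepOf hn A B) (p.1.val + n + 1) then none
    else some false

variable (hn : 0 < n) (hl : 1 ≤ ℓ) (A B : Finset (Fin n))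

lemma NP_notin (i : Fin n) (hg : GRec (stepOf hn A B) (i.val + n + 1)) :
    i ∉ A ∧ i ∉ B := by
  have hstep : stepOf hn A B (i.val + n) = -2 :=
    GRec_step (stepOf_val hn A B) hg
  have hidx : idx hn (i.val + n) = i := by
    apply Fin.ext
    show (i.val + n) % n = i.val
    rw [Nat.add_mod_right, Nat.mod_eq_of_lt i.2]
  have := stepOf_neg hn A B _ hstep
  rwa [hidx] at this

open scoped Classical in
lemma Psi_top_eq (i : Fin n) :
    Psi hn A B (i, true)
      = if i ∈ A then some true
        else if GRec (stepOf hn A B) (i.val + n + 1) then none else some false := by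
  simp [Psi]

open scoped Classical in
lemma Psi_bot_eq (i : Fin n) :
    Psi hn A B (i, false)
      = if i ∈ B then some true
        else if GRec (stepOf hn A B) (i.val + n + 1) then none else some false := by
  simp [Psi]

lemma Psi_top_none_iff (i : Fin n) :
    Psi hn A B (i, true) = none ↔ GRec (stepOf hn A B) (i.val + n + 1) := by
  rw [Psi_top_eq]
  by_cases hA : i ∈ A
  · simp only [hA, if_true]
    constructor
    · intro hcon; exact absurd hcon (by simp)
    · intro hg; exact absurd hA (NP_notin hn A B i hg).1
  · simp only [hA, if_false]
    split_ifs with hg <;> simp [hg]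

lemma Psi_bot_none_iff (i : Fin n) :
    Psi hn A B (i, false) = none ↔ GRec (stepOf hn A B) (i.val + n + 1) := by
  rw [Psi_bot_eq]
  by_cases hB : i ∈ B
  · simp only [hB, if_true]
    constructor
    · intro hcon; exact absurd hcon (by simp)
    · intro hg; exact absurd hB (NP_notin hn A B i hg).2
  · simp only [hB, if_false]
    split_ifs with hg <;> simp [hg]

lemma Psi_iff (i : Fin n) :
    Psi hn A B (i, true) = none ↔ Psi hn A B (i, false) = none := by
  rw [Psi_top_none_iff, Psi_bot_none_iff]

lemma AOf_Psi : AOf (Psi hn A B) = A := by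
  ext i
  simp only [AOf, Finset.mem_filter, Finset.mem_univ, true_and]
  rw [Psi_top_eq]
  by_cases hA : i ∈ A
  · simp [hA]
  · simp only [hA, if_false, iff_false]
    split_ifs <;> simp

lemma BOf_Psi : BOf (Psi hn A B) = B := by
  ext i
  simp only [BOf, Finset.mem_filter, Finset.mem_univ, true_and]
  rw [Psi_bot_eq]
  by_cases hB : i ∈ B
  · simp [hB]
  · simp only [hB, if_false, iff_false]
    split_ifs <;> simp

variable (hsum : FF (stepOf hn A B) n = -2 * (ℓ : ℤ))

include hl hsum in
lemma Psi_complete : IsCircComplete n (Psi hn A B) := by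
  have hper := stepOf_per hn A B
  have hval := stepOf_val hn A B
  set s := stepOf hn A B with hs
  refine ⟨Psi_iff hn A B, ?_⟩
  intro c hcnone t hno
  have hNPc : GRec s (c.val + n + 1) := (Psi_top_none_iff hn A B c).1 hcnone
  have htn : t + 1 ≤ n := by
    by_contra hcon
    push_neg at hcon
    apply hno (n - 1) (by omega)
    have hsh : shiftC c ((n - 1) + 1) = c := by
      have : (n - 1) + 1 = n := by omega
      rw [this, shiftC_n]
    rw [hsh]
    exact hcnone
  have hnoG : ∀ r, 1 ≤ r → r ≤ t → ¬ GRec s (c.val + n + 1 + r) := by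
    intro r h1 h2 hg
    obtain ⟨r', rfl⟩ : ∃ r', r = r' + 1 := ⟨r - 1, by omega⟩
    apply hno r' (by omega)
    exact (Psi_top_none_iff hn A B _).2 ((GRec_shift_iff hn hl hper hsum c r').2 hg)
  have hge := noGRec_ge hval hNPc hnoG
  have hiff := Psi_iff hn A B
  have hdiff := arc_diff hn (Psi hn A B) hiff c t
  rw [AOf_Psi, BOf_Psi, ← hs] at hdiff
  have hν : ((Finset.range t).filter
      (fun r => Psi hn A B (shiftC c (r + 1), true) = none)).card = 0 := by
    rw [Finset.card_eq_zero, Finset.filter_eq_empty_iff]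
    intro r hr
    exact hno r (Finset.mem_range.mp hr)
  rw [hν] at hdiff
  have hFt : FF s (c.val + n + 1 + t) = FF s (c.val + 1 + t) - 2 * (ℓ : ℤ) := by
    have harg : c.val + n + 1 + t = (c.val + 1 + t) + n := by omega
    rw [harg, FF_period hper hsum]
  have hF0 : FF s (c.val + n + 1) = FF s (c.val + 1) - 2 * (ℓ : ℤ) := by
    have harg : c.val + n + 1 = (c.val + 1) + n := by omega
    rw [harg, FF_period hper hsum]
  have hge_t := hge t le_rfl
  rw [hFt, hF0] at hge_t
  constructor
  · have : (arcW (Psi hn A B) c t : ℤ) ≤ (arcB (Psi hn A B) c t : ℤ) := by omega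
    exact_mod_cast this
  · intro hnext
    have hgnext : GRec s (c.val + n + 1 + (t + 1)) := by
      apply (GRec_shift_iff hn hl hper hsum c t).1
      exact (Psi_top_none_iff hn A B _).1 hnext
    have heq := eq_at_next hval hNPc hnoG (by
      have harg : c.val + n + 1 + t + 1 = c.val + n + 1 + (t + 1) := by omega
      rw [harg]
      exact hgnext)
    rw [hFt, hF0] at heq
    have : (arcB (Psi hn A B) c t : ℤ) = (arcW (Psi hn A B) c t : ℤ) := by omega
    exact_mod_cast this

include hl hsum in
open scoped Classical in
lemma Psi_neutCount : neutCount n (Psi hn A B) = ℓ := by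
  have hper := stepOf_per hn A B
  have hval := stepOf_val hn A B
  rw [neutCount]
  have hfeq : (Finset.univ : Finset (Fin n)).filter (fun i => Psi hn A B (i, true) = none)
      = (Finset.univ : Finset (Fin n)).filter
          (fun c : Fin n => GRec (stepOf hn A B) (c.val + n + 1)) := by
    apply Finset.filter_congr
    intro i _
    exact Psi_top_none_iff hn A B i
  rw [hfeq]
  exact card_NP hn hl hper hval hsum

lemma Psi_topB : topB n (Psi hn A B) = A.card := by
  rw [topB]
  congr 1
  ext i
  simp only [Finset.mem_filter, Finset.mem_univ, true_and]
  rw [Psi_top_eq]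
  by_cases hA : i ∈ A
  · simp [hA]
  · simp only [hA, if_false, iff_false]
    split_ifs <;> simp

include hl hsum in
open scoped Classical in
lemma Psi_topW : topW n (Psi hn A B) = n - A.card - ℓ := by
  have hper := stepOf_per hn A B
  have hval := stepOf_val hn A B
  set NP := (Finset.univ : Finset (Fin n)).filter
      (fun c : Fin n => GRec (stepOf hn A B) (c.val + n + 1)) with hNP
  have hNPcard : NP.card = ℓ := card_NP hn hl hper hval hsum
  have hdisj : Disjoint A NP := by
    rw [Finset.disjoint_left]
    intro i hiA hiNP
    rw [hNP, Finset.mem_filter] at hiNP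
    exact (NP_notin hn A B i hiNP.2).1 hiA
  have hkey := Finset.card_filter_add_card_filter_not
    (s := (Finset.univ : Finset (Fin n)))
    (p := fun i => i ∈ A ∨ GRec (stepOf hn A B) (i.val + n + 1))
  have h1 : (Finset.univ.filter (fun i : Fin n => i ∈ A ∨ GRec (stepOf hn A B) (i.val + n + 1)))
      = A ∪ NP := by
    ext i
    simp [hNP]
  have h2 : (Finset.univ.filter
        (fun i : Fin n => ¬(i ∈ A ∨ GRec (stepOf hn A B) (i.val + n + 1))))
      = Finset.univ.filter (fun i => Psi hn A B (i, true) = some false) := by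
    ext i
    simp only [Finset.mem_filter, Finset.mem_univ, true_and, not_or]
    rw [Psi_top_eq]
    by_cases hA : i ∈ A
    · simp [hA]
    · simp only [hA, if_false, not_false_iff, true_and]
      split_ifs with hg <;> simp [hg]
  rw [h1, h2, Finset.card_union_of_disjoint hdisj, hNPcard, Finset.card_univ,
    Fintype.card_fin] at hkey
  rw [topW]
  omega

end Psi


/-! ### the left inverse property and the main theorem -/

section Main
variable {n ℓ : ℕ}

open scoped Classical in
lemma neut_eq_NP (hn : 0 < n) (hl : 1 ≤ ℓ) (τ : Fin n × Bool → Option Bool)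
    (hτ : IsCircComplete n τ) (hcount : neutCount n τ = ℓ) :
    (Finset.univ : Finset (Fin n)).filter (fun i => τ (i, true) = none)
      = (Finset.univ : Finset (Fin n)).filter
          (fun c : Fin n => GRec (stepOf hn (AOf τ) (BOf τ)) (c.val + n + 1)) := by
  apply Finset.eq_of_subset_of_card_le
  · intro i hi
    simp only [Finset.mem_filter, Finset.mem_univ, true_and] at hi ⊢
    exact neutral_GRec hn hl τ hτ hcount i hi
  · rw [card_NP hn hl (stepOf_per hn _ _) (stepOf_val hn _ _)
      (sum_of_tau hn hl τ hτ hcount)]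
    rw [← hcount, neutCount]

lemma Psi_eq (hn : 0 < n) (hl : 1 ≤ ℓ) (τ : Fin n × Bool → Option Bool)
    (hτ : IsCircComplete n τ) (hcount : neutCount n τ = ℓ) :
    Psi hn (AOf τ) (BOf τ) = τ := by
  have hiff := hτ.1
  have hNset := neut_eq_NP hn hl τ hτ hcount
  have hNP_iff : ∀ i : Fin n,
      τ (i, true) = none ↔ GRec (stepOf hn (AOf τ) (BOf τ)) (i.val + n + 1) := by
    intro i
    have := Finset.ext_iff.mp hNset i
    simpa using this
  funext p
  obtain ⟨i, b⟩ := p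
  cases b
  · -- bottom row
    rw [Psi_bot_eq]
    rcases h1 : τ (i, false) with _ | b'
    · have htop : τ (i, true) = none := (hiff i).2 h1
      have hB : i ∉ BOf τ := by simp [BOf, h1]
      rw [if_neg hB, if_pos ((hNP_iff i).1 htop)]
    · cases b'
      · -- white below
        have hB : i ∉ BOf τ := by simp [BOf, h1]
        have hg : ¬ GRec (stepOf hn (AOf τ) (BOf τ)) (i.val + n + 1) := by
          intro hg
          have := (hNP_iff i).2 hg
          rw [(hiff i).1 this] at h1
          exact absurd h1 (by simp)
        rw [if_neg hB, if_neg hg]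
      · -- black below
        have hB : i ∈ BOf τ := by simp [BOf, h1]
        rw [if_pos hB]
  · -- top row
    rw [Psi_top_eq]
    rcases h1 : τ (i, true) with _ | b'
    · have hA : i ∉ AOf τ := by simp [AOf, h1]
      rw [if_neg hA, if_pos ((hNP_iff i).1 h1)]
    · cases b'
      · have hA : i ∉ AOf τ := by simp [AOf, h1]
        have hg : ¬ GRec (stepOf hn (AOf τ) (BOf τ)) (i.val + n + 1) := by
          intro hg
          rw [(hNP_iff i).2 hg] at h1
          exact absurd h1 (by simp)
        rw [if_neg hA, if_neg hg]
      · have hA : i ∈ AOf τ := by simp [AOf, h1]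
        rw [if_pos hA]

end Main


end Stmt6Aux

open Stmt6Aux

open scoped Classical in
/-- For `k + ℓ + m = n` with `ℓ ≥ 1`, the number of circular complete configurations
with `ℓ` neutral columns, `k` black and `m` white particles in the top row equals
`binomial n k * binomial n m`. -/
theorem stmt6 (n k ℓ m : ℕ) (h : k + ℓ + m = n) (hl : 1 ≤ ℓ) :
    ((Finset.univ : Finset (Fin n × Bool → Option Bool)).filter
        (fun τ => IsCircComplete n τ ∧ neutCount n τ = ℓ ∧ topB n τ = k ∧ topW n τ = m)).card
      = Nat.choose n k * Nat.choose n m := by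
  have hn : 0 < n := by omega
  have hcard : ((Finset.univ : Finset (Fin n)).powersetCard k
      ×ˢ (Finset.univ : Finset (Fin n)).powersetCard m).card
      = Nat.choose n k * Nat.choose n m := by
    rw [Finset.card_product, Finset.card_powersetCard, Finset.card_powersetCard,
      Finset.card_univ, Fintype.card_fin]
  rw [← hcard]
  -- sum hypothesis for any valid pair of subsets
  have hsumAB : ∀ A B : Finset (Fin n), A.card = k → B.card = m →
      FF (stepOf hn A B) n = -2 * (ℓ : ℤ) := by
    intro A B hA hB
    rw [stepOf_sum hn A B, hA, hB]
    have : (k : ℤ) + (ℓ : ℤ) + (m : ℤ) = (n : ℤ) := by exact_mod_cast h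
    ring_nf
    omega
  -- BOf card for a member of the left set
  have hBcard : ∀ τ, IsCircComplete n τ → neutCount n τ = ℓ → topB n τ = k →
      (BOf τ).card = m := by
    intro τ hτ hcount hk
    have h1 := stepOf_sum hn (AOf τ) (BOf τ)
    have h2 := sum_of_tau hn hl τ hτ hcount
    rw [h1] at h2
    rw [topB_eq_AOf] at hk
    rw [hk] at h2
    have hc : (k : ℤ) + (ℓ : ℤ) + (m : ℤ) = (n : ℤ) := by exact_mod_cast h
    omega
  refine Finset.card_bij' (fun τ _ => (AOf τ, BOf τ)) (fun p _ => Psi hn p.1 p.2) ?_ ?_ ?_ ?_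
  · -- forward maps into target
    intro τ hτ
    simp only [Finset.mem_filter, Finset.mem_univ, true_and] at hτ
    obtain ⟨hcc, hcount, hk, hm⟩ := hτ
    rw [Finset.mem_product]
    constructor
    · rw [Finset.mem_powersetCard_univ]
      rw [topB_eq_AOf] at hk
      exact hk
    · rw [Finset.mem_powersetCard_univ]
      exact hBcard τ hcc hcount hk
  · -- backward maps into source
    intro p hp
    rw [Finset.mem_product] at hp
    obtain ⟨hpa, hpb⟩ := hp
    rw [Finset.mem_powersetCard_univ] at hpa hpb
    have hsum := hsumAB p.1 p.2 hpa hpb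
    simp only [Finset.mem_filter, Finset.mem_univ, true_and]
    refine ⟨Psi_complete hn hl p.1 p.2 hsum, Psi_neutCount hn hl p.1 p.2 hsum, ?_, ?_⟩
    · rw [Psi_topB, hpa]
    · rw [Psi_topW hn hl p.1 p.2 hsum, hpa]
      omega
  · -- left inverse
    intro τ hτ
    simp only [Finset.mem_filter, Finset.mem_univ, true_and] at hτ
    exact Psi_eq hn hl τ hτ.1 hτ.2.1
  · -- right inverse
    intro p hp
    rw [AOf_Psi, BOf_Psi]
end
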